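/- arXiv:2503.09779 — 6 statements merged into one kernel-verified Lean document; each statement's English description precedes it below -/
import Mathlib

section
/- Let G be a step-2 Carnot group (as in the context) with a strongly homogeneous norm ‖·‖, and let K: G∖{0} → ℝ^d be continuous and dilation antisymmetric, i.e. K(δ_{−1}(p)) = −K(p) for all p ≠ 0. Then for every vertical hyperplane V = {(x,z) ∈ G : ⟨x,v⟩ = 0} (v ∈ ℝ^m a unit vector), every C^∞ function ψ: G → ℝ of the form ψ(p) = h(‖p‖) with χ_{B(0,1/2)} ≤ ψ ≤ χ_{B(0,2)}, and all 0 < r < R, one has ∫_V (ψ(δ_R(w)) − ψ(δ_r(w)))·K(w) dL^{N−1}(w) = 0; in particular K satisfies the annular boundedness condition. -/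
set_option linter.unusedVariables false
open MeasureTheory
open scoped ENNReal NNReal Topology

noncomputable section

namespace Carnot2

/-- Underlying space of a step-2 Carnot group in exponential coordinates: `ℝ^m × ℝ^k`. -/
abbrev G (m k : ℕ) : Type := EuclideanSpace ℝ (Fin m) × EuclideanSpace ℝ (Fin k)

/-- The type of candidate bracket (bilinear) maps `ω : ℝ^m × ℝ^m → ℝ^k`. -/
abbrev Br (m k : ℕ) : Type :=
  EuclideanSpace ℝ (Fin m) →ₗ[ℝ] EuclideanSpace ℝ (Fin m) →ₗ[ℝ] EuclideanSpace ℝ (Fin k)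

variable {m k d : ℕ}

/-- `ω` is alternating and its image spans `ℝ^k`. -/
def IsBracket (ω : Br m k) : Prop :=
  (∀ u, ω u u = 0) ∧ Submodule.span ℝ {z | ∃ u v, ω u v = z} = ⊤

/-- Group multiplication `(x,z)·(x',z') = (x+x', z+z'+ω(x,x'))`. -/
def gmul (ω : Br m k) (p q : G m k) : G m k := (p.1 + q.1, p.2 + q.2 + ω p.1 q.1)

/-- Group inverse `(x,z)⁻¹ = (-x,-z)`. -/
def ginv (p : G m k) : G m k := (-p.1, -p.2)

/-- Dilations `δ_t(x,z) = (t·x, t²·z)`. -/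
def dil (t : ℝ) (p : G m k) : G m k := (t • p.1, (t ^ 2) • p.2)

/-- Homogeneous dimension `Q = m + 2k`. -/
def homDim (m k : ℕ) : ℝ := m + 2 * k

/-- `d(p,q) = ‖q⁻¹·p‖`. -/
def dist' (ω : Br m k) (nrm : G m k → ℝ) (p q : G m k) : ℝ := nrm (gmul ω (ginv q) p)

/-- `B(p,r) = {q : d(p,q) < r}`. -/
def ball' (ω : Br m k) (nrm : G m k → ℝ) (p : G m k) (r : ℝ) : Set (G m k) :=
  {q | dist' ω nrm p q < r}

/-- A homogeneous norm. -/
structure IsHomNorm (nrm : G m k → ℝ) : Prop where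
  continuous : Continuous nrm
  nonneg : ∀ p, 0 ≤ nrm p
  eq_zero_iff : ∀ p, nrm p = 0 ↔ p = 0
  dil_eq : ∀ t : ℝ, 0 < t → ∀ p, nrm (dil t p) = t * nrm p

/-- A strongly homogeneous norm. -/
structure IsStrongHomNorm (nrm : G m k → ℝ) : Prop where
  continuous : Continuous nrm
  nonneg : ∀ p, 0 ≤ nrm p
  eq_zero_iff : ∀ p, nrm p = 0 ↔ p = 0
  dil_eq : ∀ (t : ℝ) (p : G m k), nrm (dil t p) = |t| * nrm p

/-- A `(Q-1)`-dimensional Calderón–Zygmund kernel with parameters `κ, β` and constant `CK`. -/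
structure IsCZKernel (ω : Br m k) (nrm : G m k → ℝ)
    (K : G m k → EuclideanSpace ℝ (Fin d)) (κ β CK : ℝ) : Prop where
  continuousOn : ContinuousOn K {p | p ≠ 0}
  kappa_mem : κ ∈ Set.Ioo (0 : ℝ) 1
  beta_mem : β ∈ Set.Ioc (0 : ℝ) 1
  one_le : 1 ≤ CK
  growth : ∀ p : G m k, p ≠ 0 → ‖K p‖ ≤ CK / nrm p ^ (homDim m k - 1)
  holder : ∀ p₁ p₂ : G m k, p₁ ≠ 0 → p₂ ≠ 0 →
    nrm (gmul ω (ginv p₂) p₁) ≤ κ * nrm p₁ →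
    ‖K p₁ - K p₂‖ ≤ CK * nrm (gmul ω (ginv p₂) p₁) ^ β / nrm p₁ ^ (homDim m k - 1 + β)

/-- First basis vector of the horizontal layer. -/
def e1 (m : ℕ) : EuclideanSpace ℝ (Fin m) :=
  if h : 0 < m then EuclideanSpace.single ⟨0, h⟩ 1 else 0

/-- The vertical hyperplane `W = {(x,z) : ⟨x,e₁⟩ = 0}`. -/
def Wset (m k : ℕ) : Set (G m k) := {p | (inner ℝ p.1 (e1 m) : ℝ) = 0}

/-- A general vertical hyperplane `{(x,z) : ⟨x,v⟩ = 0}`. -/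
def vertical {m : ℕ} (k : ℕ) (v : EuclideanSpace ℝ (Fin m)) : Set (G m k) :=
  {p | (inner ℝ p.1 v : ℝ) = 0}

/-- The graph map `w ↦ w·(φ(w)e₁, 0)`. -/
def graphMap (ω : Br m k) (φ : G m k → ℝ) (w : G m k) : G m k :=
  gmul ω w (φ w • e1 m, 0)

/-- The intrinsic graph `Σ(φ)`. -/
def graphSet (ω : Br m k) (φ : G m k → ℝ) : Set (G m k) :=
  graphMap ω φ '' Wset m k

/-- The translated function `φ^{(p⁻¹)}` associated to the graph point over `wb ∈ W`:
`φ^{(p⁻¹)}(x,z) = φ(x̄+x, z̄+z+ω(x̄+2φ(wb)e₁, x)) − φ(wb)`. -/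
def transl (ω : Br m k) (φ : G m k → ℝ) (wb : G m k) (w : G m k) : ℝ :=
  φ (wb.1 + w.1, wb.2 + w.2 + ω (wb.1 + (2 * φ wb) • e1 m) w.1) - φ wb

/-- Intrinsic differentiability of `φ` at `wb ∈ W` with intrinsic gradient `g ∈ e₁^⊥`. -/
def HasIntrinsicGradientAt (ω : Br m k) (nrm : G m k → ℝ) (φ : G m k → ℝ)
    (wb : G m k) (g : EuclideanSpace ℝ (Fin m)) : Prop :=
  (inner ℝ g (e1 m) : ℝ) = 0 ∧
    ∀ ε : ℝ, 0 < ε → ∃ δ : ℝ, 0 < δ ∧ ∀ w ∈ Wset m k, nrm w < δ →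
      |transl ω φ wb w - (inner ℝ g w.1 : ℝ)| ≤ ε * nrm w

/-- `φ ∈ C^{1,α}(W)` with constant `H` (with intrinsic gradient function `gradφ`). -/
def IsC1Alpha (ω : Br m k) (nrm : G m k → ℝ) (φ : G m k → ℝ)
    (gradφ : G m k → EuclideanSpace ℝ (Fin m)) (α H : ℝ) : Prop :=
  (∀ wb ∈ Wset m k, HasIntrinsicGradientAt ω nrm φ wb (gradφ wb)) ∧
    ∀ wb ∈ Wset m k, ∃ gψ : G m k → EuclideanSpace ℝ (Fin m),
      (∀ w ∈ Wset m k, HasIntrinsicGradientAt ω nrm (transl ω φ wb) w (gψ w)) ∧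
      ∀ w ∈ Wset m k, ‖gψ w - gψ 0‖ ≤ H * nrm w ^ α

/-- The decay conditions at infinity for the graph function `φ`. -/
def DecayAtInfinity (ω : Br m k) (nrm : G m k → ℝ) (φ : G m k → ℝ)
    (gradφ : G m k → EuclideanSpace ℝ (Fin m)) (γ θ C₀ : ℝ) : Prop :=
  (∀ wb ∈ Wset m k, ∀ w ∈ Wset m k, |transl ω φ wb w| ≤ C₀ * nrm w ^ (1 - θ)) ∧
    ∀ w ∈ Wset m k, w ≠ 0 → ‖gradφ w‖ ≤ C₀ * nrm w ^ (-γ)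

/-- The annular boundedness (AB) condition. -/
def SatisfiesAB (ω : Br m k) (nrm : G m k → ℝ)
    (K : G m k → EuclideanSpace ℝ (Fin d)) : Prop :=
  ∀ ψ : G m k → ℝ, ContDiff ℝ (⊤ : ℕ∞) ψ →
    (∃ h : ℝ → ℝ, ∀ p, ψ p = h (nrm p)) →
    (∀ p, nrm p < 1 / 2 → 1 ≤ ψ p) → (∀ p, 0 ≤ ψ p) → (∀ p, ψ p ≤ 1) →
    (∀ p, 2 ≤ nrm p → ψ p = 0) →
    ∃ A : ℝ, 1 ≤ A ∧
      ∀ v : EuclideanSpace ℝ (Fin m), ‖v‖ = 1 → ∀ r R : ℝ, 0 < r → r < R →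
        ‖∫ w in vertical k v, (ψ (dil R w) - ψ (dil r w)) • K w ∂(μH[(m + k : ℝ) - 1])‖ ≤ A

/-- Topological support of a measure. -/
def suppM (μ : Measure (G m k)) : Set (G m k) :=
  {p | ∀ U : Set (G m k), IsOpen U → p ∈ U → 0 < μ U}

/-- Diameter of a set with respect to `d(p,q) = ‖q⁻¹·p‖`. -/
def diamD (ω : Br m k) (nrm : G m k → ℝ) (s : Set (G m k)) : ℝ≥0∞ :=
  ⨆ p ∈ s, ⨆ q ∈ s, ENNReal.ofReal (dist' ω nrm p q)

/-- `(Q-1)`-Ahlfors–David regularity of a measure, with constant `C`. -/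
def IsADR (ω : Br m k) (nrm : G m k → ℝ) (μ : Measure (G m k)) (C : ℝ) : Prop :=
  1 ≤ C ∧ ∀ p ∈ suppM μ, ∀ r : ℝ, 0 < r →
    ENNReal.ofReal r ≤ diamD ω nrm (suppM μ) →
    ENNReal.ofReal (C⁻¹ * r ^ (homDim m k - 1)) ≤ μ (ball' ω nrm p r) ∧
      μ (ball' ω nrm p r) ≤ ENNReal.ofReal (C * r ^ (homDim m k - 1))

/-- The truncated singular integral operator `T_{μ,ε}` associated to kernel `K` and
quasidistance `dd`. -/
def truncT (ω : Br m k) (dd : G m k → G m k → ℝ) (K : G m k → EuclideanSpace ℝ (Fin d))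
    (μ : Measure (G m k)) (ε : ℝ) (f : G m k → ℝ) (p : G m k) :
    EuclideanSpace ℝ (Fin d) :=
  ∫ q in {q | ε < dd p q}, f q • K (gmul ω (ginv q) p) ∂μ

/-- The horizontal vector field `X_l` at `p`: `X_l(x,z) = (e_l, ω(x,e_l))`. -/
def Xvec (ω : Br m k) (l : Fin m) (p : G m k) : G m k :=
  (EuclideanSpace.single l 1, ω p.1 (EuclideanSpace.single l 1))

/-- The horizontal derivative `X_l f(p)`. -/
def Xderiv (ω : Br m k) (l : Fin m) (f : G m k → ℝ) (p : G m k) : ℝ :=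
  fderiv ℝ f p (Xvec ω l p)

/-- The horizontal gradient `∇_G f = (X₁f, …, X_mf)`. -/
def gradG (ω : Br m k) (f : G m k → ℝ) (p : G m k) : EuclideanSpace ℝ (Fin m) :=
  (WithLp.equiv 2 (Fin m → ℝ)).symm fun l => Xderiv ω l f p

/-- The sub-Laplacian `Δ_G f = Σ X_l² f`. -/
def subLap (ω : Br m k) (f : G m k → ℝ) (p : G m k) : ℝ :=
  ∑ l : Fin m, Xderiv ω l (Xderiv ω l f) p

/-- `Γ` is a fundamental solution of the sub-Laplacian. -/
structure IsFundSol (ω : Br m k) (Γ : G m k → ℝ) : Prop where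
  smooth : ContDiffOn ℝ (⊤ : ℕ∞) Γ {p : G m k | p ≠ 0}
  locInt : LocallyIntegrable Γ volume
  vanish : Filter.Tendsto Γ (Filter.cocompact (G m k)) (nhds 0)
  hom : ∀ t : ℝ, t ≠ 0 → ∀ p : G m k, p ≠ 0 → Γ (dil t p) = |t| ^ (2 - homDim m k) * Γ p
  fund : ∀ φ : G m k → ℝ, ContDiff ℝ (⊤ : ℕ∞) φ → HasCompactSupport φ →
    ∫ p, Γ p * subLap ω φ p = -φ 0

/-- `f` is locally Lipschitz on `D` with respect to the distance `d₀`. -/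
def LocallyLipschitzWithin (d₀ : G m k → G m k → ℝ) (f : G m k → ℝ)
    (D : Set (G m k)) : Prop :=
  ∀ p ∈ D, ∃ U : Set (G m k), IsOpen U ∧ p ∈ U ∧ U ⊆ D ∧
    ∃ L : ℝ, ∀ x ∈ U, ∀ y ∈ U, |f x - f y| ≤ L * d₀ x y

/-- `f` is harmonic on the open set `D`: smooth with vanishing sub-Laplacian. -/
def HarmonicOn (ω : Br m k) (f : G m k → ℝ) (D : Set (G m k)) : Prop :=
  ContDiffOn ℝ (⊤ : ℕ∞) f D ∧ ∀ p ∈ D, subLap ω f p = 0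

/-- `C` is removable for Lipschitz harmonic functions. -/
def RemovableLH (ω : Br m k) (d₀ : G m k → G m k → ℝ) (C : Set (G m k)) : Prop :=
  ∀ D : Set (G m k), IsOpen D → ∀ f : G m k → ℝ,
    LocallyLipschitzWithin d₀ f D → HarmonicOn ω f (D \ C) → HarmonicOn ω f D

/-- `d₀` is a left-invariant metric inducing the Euclidean topology, `1`-homogeneous with
respect to the dilations `δ_t`, `t > 0`. -/
structure IsLeftInvHomMetric (ω : Br m k) (d₀ : G m k → G m k → ℝ) : Prop where
  eq_zero_iff : ∀ p q, d₀ p q = 0 ↔ p = q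
  symm : ∀ p q, d₀ p q = d₀ q p
  triangle : ∀ p q r, d₀ p r ≤ d₀ p q + d₀ q r
  topology : ∀ s : Set (G m k), IsOpen s ↔ ∀ p ∈ s, ∃ ε : ℝ, 0 < ε ∧ {q | d₀ p q < ε} ⊆ s
  left_inv : ∀ g p q, d₀ (gmul ω g p) (gmul ω g q) = d₀ p q
  hom : ∀ t : ℝ, 0 < t → ∀ p q, d₀ (dil t p) (dil t q) = t * d₀ p q

/-- Diameter of a set with respect to a distance function `d₀`. -/
def ediam₀ (d₀ : G m k → G m k → ℝ) (A : Set (G m k)) : ℝ≥0∞ :=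
  ⨆ p ∈ A, ⨆ q ∈ A, ENNReal.ofReal (d₀ p q)

/-- The `s`-dimensional Hausdorff (outer) measure of the quasi-metric space `(G, d₀)`. -/
def hausdorff₀ (d₀ : G m k → G m k → ℝ) (s : ℝ) (E : Set (G m k)) : ℝ≥0∞ :=
  ⨆ (δ : ℝ≥0∞) (_ : 0 < δ),
    ⨅ (t : ℕ → Set (G m k)) (_ : E ⊆ ⋃ n, t n) (_ : ∀ n, ediam₀ d₀ (t n) ≤ δ),
      ∑' n, ediam₀ d₀ (t n) ^ s

/-- The upper Lebesgue integral. -/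
def upperLintegral {X : Type*} [MeasurableSpace X] (μ : Measure X) (f : X → ℝ≥0∞) : ℝ≥0∞ :=
  ⨅ (g : X → ℝ≥0∞) (_ : Measurable g) (_ : ∀ x, f x ≤ g x), ∫⁻ x, g x ∂μ

/-- Projection to the vertical hyperplane `{⟨x,v⟩ = 0}` along horizontal lines:
`p = π_W(p)·(⟨x,v⟩·v, 0)`. -/
def piW (ω : Br m k) (v : EuclideanSpace ℝ (Fin m)) (p : G m k) : G m k :=
  gmul ω p (ginv ((inner ℝ p.1 v : ℝ) • v, 0))

/-- The norm `‖(x,z)‖ = |x| + |z|^{1/2}`. -/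
def nrmK (p : G m k) : ℝ := ‖p.1‖ + Real.sqrt ‖p.2‖

/-- The Carnot–Carathéodory norm. -/
def ccNorm (ω : Br m k) (z : G m k) : ℝ :=
  sInf {r : ℝ | 0 < r ∧ ∃ γ : ℝ → G m k, ∃ a : ℝ → EuclideanSpace ℝ (Fin m),
    Continuous a ∧ (∀ s, ‖a s‖ < 1) ∧ γ 0 = 0 ∧ γ 1 = z ∧
    ∀ s ∈ Set.Icc (0 : ℝ) 1,
      HasDerivWithinAt γ ((r • a s, ω (γ s).1 (r • a s)) : G m k) (Set.Icc 0 1) s}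



/-- The isometry `(x,z) ↦ (-x,z)`, i.e. the dilation `δ₋₁`, as an isometry equivalence. -/
def negFst (m k : ℕ) : G m k ≃ᵢ G m k where
  toEquiv := (Equiv.neg (EuclideanSpace ℝ (Fin m))).prodCongr (Equiv.refl _)
  isometry_toFun := fun p q => by
    simp [Prod.edist_eq, edist_neg_neg, Equiv.prodCongr]

lemma negFst_apply (m k : ℕ) (p : G m k) : negFst m k p = (-p.1, p.2) := rfl

lemma negFst_eq_dil (p : G m k) : negFst m k p = dil (-1) p := by
  simp [negFst_apply, dil, neg_smul, one_smul]

/-- Dilation antisymmetric kernels have vanishing annular hyperplane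
integrals; in particular they satisfy the annular boundedness condition. -/
theorem statement6 {m k d : ℕ} (hm : 2 ≤ m) (hk : 1 ≤ k)
    (ω : Br m k) (hω : IsBracket ω)
    (nrm : G m k → ℝ) (hnrm : IsStrongHomNorm nrm)
    (K : G m k → EuclideanSpace ℝ (Fin d))
    (hKcont : ContinuousOn K {p : G m k | p ≠ 0})
    (hKanti : ∀ p : G m k, p ≠ 0 → K (dil (-1) p) = -K p) :
    (∀ ψ : G m k → ℝ, ContDiff ℝ (⊤ : ℕ∞) ψ →
      (∃ h : ℝ → ℝ, ∀ p, ψ p = h (nrm p)) →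
      (∀ p, nrm p < 1 / 2 → 1 ≤ ψ p) → (∀ p, 0 ≤ ψ p) → (∀ p, ψ p ≤ 1) →
      (∀ p, 2 ≤ nrm p → ψ p = 0) →
      ∀ v : EuclideanSpace ℝ (Fin m), ‖v‖ = 1 → ∀ r R : ℝ, 0 < r → r < R →
        (∫ w in vertical k v, (ψ (dil R w) - ψ (dil r w)) • K w
            ∂(μH[(m + k : ℝ) - 1])) = 0) ∧
    SatisfiesAB ω nrm K := by
  have main : (∀ ψ : G m k → ℝ, ContDiff ℝ (⊤ : ℕ∞) ψ →
      (∃ h : ℝ → ℝ, ∀ p, ψ p = h (nrm p)) →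
      (∀ p, nrm p < 1 / 2 → 1 ≤ ψ p) → (∀ p, 0 ≤ ψ p) → (∀ p, ψ p ≤ 1) →
      (∀ p, 2 ≤ nrm p → ψ p = 0) →
      ∀ v : EuclideanSpace ℝ (Fin m), ‖v‖ = 1 → ∀ r R : ℝ, 0 < r → r < R →
        (∫ w in vertical k v, (ψ (dil R w) - ψ (dil r w)) • K w
            ∂(μH[(m + k : ℝ) - 1])) = 0) := by
    intro ψ hψ hrad hψ1 hψ0 hψle hψ2 v hv r R hr hrR
    obtain ⟨h, hh⟩ := hrad
    set μ : Measure (G m k) := μH[(m + k : ℝ) - 1] with hμ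
    set S : Set (G m k) := vertical k v with hSdef
    set f : G m k → EuclideanSpace ℝ (Fin d) :=
      fun w => (ψ (dil R w) - ψ (dil r w)) • K w with hf
    set ι : G m k ≃ᵢ G m k := negFst m k with hι
    -- the vertical hyperplane is measurable
    have hcont : Continuous fun p : G m k => (inner ℝ p.1 v : ℝ) :=
      Continuous.inner continuous_fst continuous_const
    have hS : MeasurableSet S := (isClosed_eq hcont continuous_const).measurableSet
    -- ι preserves the vertical hyperplane
    have hιS : ι ⁻¹' S = S := by
      ext p
      simp only [Set.mem_preimage, hSdef, vertical, Set.mem_setOf_eq, hι, negFst_apply,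
        inner_neg_left, neg_eq_zero]
    -- ι preserves Hausdorff measure restricted to S
    have hmp : MeasurePreserving ι (μ.restrict S) (μ.restrict S) := by
      refine ⟨ι.continuous.measurable, ?_⟩
      have := Measure.restrict_map (μ := μ) ι.continuous.measurable hS
      rw [(ι.measurePreserving_hausdorffMeasure ((m + k : ℝ) - 1)).map_eq] at this
      rw [hιS] at this
      exact this.symm
    -- dil of zero is zero
    have hdil0 : ∀ t : ℝ, dil t (0 : G m k) = 0 := by
      intro t; simp [dil]
    -- ψ ∘ dil t is invariant under ι, for t > 0
    have hψinv : ∀ (t : ℝ), 0 < t → ∀ w : G m k, ψ (dil t (ι w)) = ψ (dil t w) := by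
      intro t ht w
      have hcomm : dil t (ι w) = dil (-1) (dil t w) := by
        simp [hι, negFst_apply, dil, smul_smul, mul_comm]
      rw [hh, hh, hcomm]
      congr 1
      calc nrm (dil (-1) (dil t w)) = |(-1 : ℝ)| * nrm (dil t w) := hnrm.dil_eq _ _
        _ = nrm (dil t w) := by norm_num
    -- the integrand is odd under ι
    have key : ∀ w : G m k, f (ι w) = - f w := by
      intro w
      by_cases hw : w = 0
      · subst hw
        have h0 : ι (0 : G m k) = 0 := by
          simp [hι, negFst_apply, Prod.ext_iff]
        rw [h0]
        simp [hf, hdil0]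
      · have hK : K (ι w) = - K w := by
          rw [negFst_eq_dil]; exact hKanti w hw
        simp only [hf, hψinv R (hr.trans hrR) w, hψinv r hr w, hK, smul_neg]
    -- substitute and conclude
    have hsub : (∫ w in S, f (ι w) ∂μ) = ∫ w in S, f w ∂μ :=
      hmp.integral_comp ι.toHomeomorph.measurableEmbedding f
    have hneg : (∫ w in S, f (ι w) ∂μ) = - ∫ w in S, f w ∂μ := by
      simp only [key]
      exact integral_neg f
    have heq : (∫ w in S, f w ∂μ) = - ∫ w in S, f w ∂μ := hsub.symm.trans hneg
    have h2 : (2 : ℝ) • (∫ w in S, f w ∂μ) = 0 := by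
      rw [two_smul]
      nth_rewrite 2 [heq]
      simp
    rcases smul_eq_zero.mp h2 with h | h
    · norm_num at h
    · exact h
  refine ⟨main, ?_⟩
  intro ψ hψ hrad hψ1 hψ0 hψle hψ2
  refine ⟨1, le_refl 1, ?_⟩
  intro v hv r R hr hrR
  rw [main ψ hψ hrad hψ1 hψ0 hψle hψ2 v hv r R hr hrR]
  simp

end Carnot2
end
end

section
/- Let G be a step-2 Carnot group (as in the context) with a homogeneous norm ‖·‖ that is symmetric, i.e. ‖p^{-1}‖ = ‖p‖ for all p ∈ G, and let K: G∖{0} → ℝ^d be continuous and antisymmetric, i.e. K(p^{-1}) = −K(p) for all p ≠ 0. Then for every vertical hyperplane V = {(x,z) ∈ G : ⟨x,v⟩ = 0} (v ∈ ℝ^m a unit vector), every C^∞ function ψ: G → ℝ of the form ψ(p) = h(‖p‖) with χ_{B(0,1/2)} ≤ ψ ≤ χ_{B(0,2)}, and all 0 < r < R, one has ∫_V (ψ(δ_R(w)) − ψ(δ_r(w)))·K(w) dL^{N−1}(w) = 0; in particular K satisfies the annular boundedness condition. -/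
set_option linter.unusedVariables false
open MeasureTheory
open scoped ENNReal NNReal Topology

noncomputable section

namespace Carnot2

variable {m k d : ℕ}

/-- For a symmetric homogeneous norm, antisymmetric kernels have
vanishing annular hyperplane integrals; in particular they satisfy the annular
boundedness condition. -/
theorem statement7 {m k d : ℕ} (hm : 2 ≤ m) (hk : 1 ≤ k)
    (ω : Br m k) (hω : IsBracket ω)
    (nrm : G m k → ℝ) (hnrm : IsHomNorm nrm)
    (hsym : ∀ p : G m k, nrm (ginv p) = nrm p)
    (K : G m k → EuclideanSpace ℝ (Fin d))
    (hKcont : ContinuousOn K {p : G m k | p ≠ 0})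
    (hKanti : ∀ p : G m k, p ≠ 0 → K (ginv p) = -K p) :
    (∀ ψ : G m k → ℝ, ContDiff ℝ (⊤ : ℕ∞) ψ →
      (∃ h : ℝ → ℝ, ∀ p, ψ p = h (nrm p)) →
      (∀ p, nrm p < 1 / 2 → 1 ≤ ψ p) → (∀ p, 0 ≤ ψ p) → (∀ p, ψ p ≤ 1) →
      (∀ p, 2 ≤ nrm p → ψ p = 0) →
      ∀ v : EuclideanSpace ℝ (Fin m), ‖v‖ = 1 → ∀ r R : ℝ, 0 < r → r < R →
        (∫ w in vertical k v, (ψ (dil R w) - ψ (dil r w)) • K w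
            ∂(μH[(m + k : ℝ) - 1])) = 0) ∧
    SatisfiesAB ω nrm K := by
  have main : ∀ ψ : G m k → ℝ, ContDiff ℝ (⊤ : ℕ∞) ψ →
      (∃ h : ℝ → ℝ, ∀ p, ψ p = h (nrm p)) →
      (∀ p, nrm p < 1 / 2 → 1 ≤ ψ p) → (∀ p, 0 ≤ ψ p) → (∀ p, ψ p ≤ 1) →
      (∀ p, 2 ≤ nrm p → ψ p = 0) →
      ∀ v : EuclideanSpace ℝ (Fin m), ‖v‖ = 1 → ∀ r R : ℝ, 0 < r → r < R →
        (∫ w in vertical k v, (ψ (dil R w) - ψ (dil r w)) • K w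
            ∂(μH[(m + k : ℝ) - 1])) = 0 := by
    intro ψ hψsmooth hψrad hψ1 hψ0 hψle hψ2 v hv r R hr hrR
    obtain ⟨h, hh⟩ := hψrad
    set μ : Measure (G m k) := μH[(m + k : ℝ) - 1]
    set S : Set (G m k) := vertical k v
    set f : G m k → EuclideanSpace ℝ (Fin d) :=
      fun w => (ψ (dil R w) - ψ (dil r w)) • K w with hf
    -- ψ is even: ψ(-p) = ψ(p)
    have hψeven : ∀ p : G m k, ψ (-p) = ψ p := by
      intro p
      have : (-p : G m k) = ginv p := rfl
      rw [this, hh, hh, hsym]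
    -- dil commutes with negation
    have hdilneg : ∀ (t : ℝ) (p : G m k), dil t (-p) = -(dil t p) := by
      intro t p
      simp [dil, Prod.ext_iff, smul_neg]
    -- f is odd
    have hfodd : ∀ w : G m k, f (-w) = -f w := by
      intro w
      by_cases hw : w = 0
      · subst hw
        have h0 : dil R (0 : G m k) = 0 := by simp [dil, Prod.ext_iff]
        have h0' : dil r (0 : G m k) = 0 := by simp [dil, Prod.ext_iff]
        simp [hf, h0, h0']
      · have hK : K (-w) = -K w := by
          have : (-w : G m k) = ginv w := rfl
          rw [this]; exact hKanti w hw
        simp only [hf, hdilneg, hψeven, hK, smul_neg]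
    -- the vertical hyperplane is symmetric under negation
    have hSneg : (fun w : G m k => -w) ⁻¹' S = S := by
      ext p
      simp only [Set.mem_preimage, S, vertical, Set.mem_setOf_eq, Prod.fst_neg,
        inner_neg_left, neg_eq_zero]
    -- negation preserves the Hausdorff measure
    have e : G m k ≃ᵢ G m k := IsometryEquiv.neg (G m k)
    have hmp : MeasurePreserving (fun w : G m k => -w) μ μ :=
      (IsometryEquiv.neg (G m k)).measurePreserving_hausdorffMeasure _
    have hemb : MeasurableEmbedding (fun w : G m k => -w) :=
      (IsometryEquiv.neg (G m k)).toHomeomorph.toMeasurableEquiv.measurableEmbedding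
    have key : (∫ w in S, f (-w) ∂μ) = ∫ w in S, f w ∂μ := by
      have := hmp.setIntegral_preimage_emb hemb f S
      rwa [hSneg] at this
    have key2 : (∫ w in S, f w ∂μ) = -∫ w in S, f w ∂μ := by
      conv_lhs => rw [← key]
      simp_rw [hfodd]
      exact integral_neg f
    have hsum : (∫ w in S, f w ∂μ) + ∫ w in S, f w ∂μ = 0 :=
      add_eq_zero_iff_eq_neg.mpr key2
    have h2 : (2 : ℝ) • (∫ w in S, f w ∂μ) = 0 := by
      rw [two_smul]; exact hsum
    have := smul_eq_zero.mp h2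
    rcases this with h' | h'
    · norm_num at h'
    · exact h'
  refine ⟨main, ?_⟩
  intro ψ hψsmooth hψrad hψ1 hψ0 hψle hψ2
  refine ⟨1, le_refl 1, ?_⟩
  intro v hv r R hr hrR
  rw [main ψ hψsmooth hψrad hψ1 hψ0 hψle hψ2 v hv r R hr hrR]
  simp

end Carnot2
end
end

section
/- Let G be a step-2 Carnot group (as in the context) with a strongly homogeneous norm ‖·‖ and d(p,q) = ‖q^{-1}·p‖, and let K: G∖{0} → ℝ^d be a (Q−1)-dimensional Calderón–Zygmund kernel with parameters κ, β and constant C_K. Then there exist constants C ≥ 1 and C' > 0, depending only on κ, β, C_K, ω and ‖·‖, such that |K(q^{-1}·p₁) − K(q^{-1}·p₂)| + |K(p₁^{-1}·q) − K(p₂^{-1}·q)| ≤ C'·‖p₂^{-1}·p₁‖^{β/2} / ‖q^{-1}·p₁‖^{Q−1+β/2} for every q ∈ G and p₁, p₂ ∈ G∖{q} with d(p₁,p₂) ≤ d(p₁,q)/C. -/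
set_option linter.unusedVariables false
open MeasureTheory
open scoped ENNReal NNReal Topology

noncomputable section

namespace Carnot2

variable {m k d : ℕ}

/-! ### Auxiliary lemmas for statement11 -/

lemma br_antisymm (ω : Br m k) (hω : ∀ u, ω u u = 0) (u v) : ω u v = - ω v u := by
  have h := hω (u + v)
  simp [map_add, LinearMap.add_apply, hω] at h
  exact eq_neg_of_add_eq_zero_right h

lemma gmul_cancel_left (ω : Br m k) (hω : ∀ u, ω u u = 0) (q p₁ p₂ : G m k) :
    gmul ω (ginv (gmul ω (ginv q) p₂)) (gmul ω (ginv q) p₁) = gmul ω (ginv p₂) p₁ := by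
  have ha := br_antisymm ω hω
  simp only [gmul, ginv, Prod.mk.injEq]
  constructor
  · abel
  · simp only [map_add, map_neg, map_sub, LinearMap.add_apply, LinearMap.neg_apply,
      LinearMap.sub_apply, hω, neg_add_rev, neg_neg]
    rw [ha q.1 p₂.1]; abel

lemma gmul_ginv_comm (ω : Br m k) (hω : ∀ u, ω u u = 0) (p q : G m k) :
    gmul ω (ginv p) q = ginv (gmul ω (ginv q) p) := by
  have ha := br_antisymm ω hω
  simp only [gmul, ginv, Prod.mk.injEq]
  constructor
  · abel
  · simp only [map_neg, LinearMap.neg_apply, neg_add_rev, neg_neg]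
    rw [ha q.1 p.1]
    abel

lemma gmul_adj (ω : Br m k) (hω : ∀ u, ω u u = 0) (q p₁ p₂ : G m k) :
    gmul ω (ginv (gmul ω (ginv p₂) q)) (gmul ω (ginv p₁) q) =
      (-(gmul ω (ginv p₂) p₁).1,
        -(gmul ω (ginv p₂) p₁).2 + (2:ℝ) • ω (gmul ω (ginv p₂) p₁).1 (p₂.1 - q.1)) := by
  have ha := br_antisymm ω hω
  simp only [gmul, ginv, Prod.mk.injEq]
  constructor
  · abel
  · simp only [map_add, map_neg, map_sub, LinearMap.add_apply, LinearMap.neg_apply,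
      LinearMap.sub_apply, hω, neg_add_rev, neg_neg, smul_add, smul_neg, smul_sub, two_smul]
    rw [ha q.1 p₁.1, ha p₁.1 p₂.1]; abel

lemma gmul_ginv_self (ω : Br m k) (hω : ∀ u, ω u u = 0) (p : G m k) :
    gmul ω (ginv p) p = 0 := by
  simp [gmul, ginv, map_neg, hω, Prod.ext_iff]

lemma gmul_ginv_eq_zero_iff (ω : Br m k) (hω : ∀ u, ω u u = 0) (p q : G m k) :
    gmul ω (ginv q) p = 0 ↔ p = q := by
  constructor
  · intro h
    rw [Prod.ext_iff] at h ⊢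
    obtain ⟨h1, h2⟩ := h
    simp only [gmul, ginv, Prod.fst_zero, Prod.snd_zero] at h1 h2
    have hx : p.1 = q.1 := (neg_add_eq_zero.mp h1).symm
    rw [hx] at h2
    simp only [map_neg, LinearMap.neg_apply, hω, neg_zero, add_zero] at h2
    exact ⟨hx, (neg_add_eq_zero.mp h2).symm⟩
  · rintro rfl
    simp [gmul, ginv, map_neg, hω, Prod.ext_iff]

/-- A reference homogeneous gauge. -/
def rho (p : G m k) : ℝ := max ‖p.1‖ (Real.sqrt ‖p.2‖)

lemma rho_nonneg (p : G m k) : 0 ≤ rho p := le_trans (norm_nonneg _) (le_max_left _ _)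

lemma norm_fst_le_rho (p : G m k) : ‖p.1‖ ≤ rho p := le_max_left _ _

lemma norm_snd_le_rho_sq (p : G m k) : ‖p.2‖ ≤ rho p ^ 2 := by
  have h : Real.sqrt ‖p.2‖ ≤ rho p := le_max_right _ _
  calc ‖p.2‖ = Real.sqrt ‖p.2‖ ^ 2 := (Real.sq_sqrt (norm_nonneg _)).symm
    _ ≤ rho p ^ 2 := by nlinarith [Real.sqrt_nonneg ‖p.2‖]

lemma rho_eq_zero_iff (p : G m k) : rho p = 0 ↔ p = 0 := by
  constructor
  · intro h
    have h1 : ‖p.1‖ = 0 := le_antisymm (h ▸ norm_fst_le_rho p) (norm_nonneg _)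
    have h2 : ‖p.2‖ = 0 := by
      have := norm_snd_le_rho_sq p; rw [h] at this; nlinarith [norm_nonneg p.2]
    rw [Prod.ext_iff]
    exact ⟨norm_eq_zero.mp h1, norm_eq_zero.mp h2⟩
  · rintro rfl; simp [rho]

lemma rho_ginv (p : G m k) : rho (ginv p) = rho p := by simp [rho, ginv]

lemma rho_dil (t : ℝ) (p : G m k) : rho (dil t p) = |t| * rho p := by
  simp only [rho, dil, norm_smul, Real.norm_eq_abs]
  rw [Real.sqrt_mul (by positivity), abs_of_nonneg (sq_nonneg t), Real.sqrt_sq_eq_abs,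
    ← mul_max_of_nonneg _ _ (abs_nonneg t)]

lemma dil_dil (a b : ℝ) (p : G m k) : dil a (dil b p) = dil (a * b) p := by
  simp [dil, smul_smul, mul_pow]

lemma dil_one (p : G m k) : dil 1 p = p := by simp [dil]

lemma rho_continuous : Continuous (rho : G m k → ℝ) :=
  (continuous_norm.comp continuous_fst).max
    (Real.continuous_sqrt.comp (continuous_norm.comp continuous_snd))

lemma br_bound (ω : Br m k) : ∃ M : ℝ, 1 ≤ M ∧ ∀ x y, ‖ω x y‖ ≤ M * ‖x‖ * ‖y‖ := by
  let L₁ : EuclideanSpace ℝ (Fin m) →ₗ[ℝ]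
      (EuclideanSpace ℝ (Fin m) →L[ℝ] EuclideanSpace ℝ (Fin k)) :=
    (LinearMap.toContinuousLinearMap :
      (EuclideanSpace ℝ (Fin m) →ₗ[ℝ] EuclideanSpace ℝ (Fin k)) ≃ₗ[ℝ] _).toLinearMap ∘ₗ ω
  let L := LinearMap.toContinuousLinearMap L₁
  refine ⟨max ‖L‖ 1, le_max_right _ _, fun x y => ?_⟩
  have h1 : ‖ω x y‖ = ‖(L x) y‖ := rfl
  calc ‖ω x y‖ = ‖(L x) y‖ := h1
    _ ≤ ‖L x‖ * ‖y‖ := (L x).le_opNorm y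
    _ ≤ (‖L‖ * ‖x‖) * ‖y‖ := by
        have := L.le_opNorm x
        nlinarith [norm_nonneg y, norm_nonneg x, norm_nonneg (L x)]
    _ ≤ max ‖L‖ 1 * ‖x‖ * ‖y‖ := by
        gcongr
        exact le_max_left _ _

lemma nrm_pos {nrm : G m k → ℝ} (hnrm : IsStrongHomNorm nrm) {p : G m k} (hp : p ≠ 0) :
    0 < nrm p :=
  lt_of_le_of_ne (hnrm.nonneg p) (fun h => hp ((hnrm.eq_zero_iff p).mp h.symm))

lemma nrm_comp (hm : 0 < m) (nrm : G m k → ℝ) (hnrm : IsStrongHomNorm nrm) :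
    ∃ A B : ℝ, 0 < A ∧ A ≤ 1 ∧ 1 ≤ B ∧ ∀ p : G m k, A * rho p ≤ nrm p ∧ nrm p ≤ B * rho p := by
  set S : Set (G m k) := rho ⁻¹' {1} with hS_def
  have hS_closed : IsClosed S := isClosed_singleton.preimage rho_continuous
  have hS_sub : S ⊆ Metric.closedBall 0 1 := by
    intro p hp
    have hp1 : rho p = 1 := hp
    simp only [Metric.mem_closedBall, dist_zero_right]
    have h1 : ‖p.1‖ ≤ 1 := hp1 ▸ norm_fst_le_rho p
    have h2 : ‖p.2‖ ≤ 1 := by have := norm_snd_le_rho_sq p; rw [hp1] at this; nlinarith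
    calc ‖p‖ = max ‖p.1‖ ‖p.2‖ := rfl
      _ ≤ 1 := max_le h1 h2
  have hS_cpt : IsCompact S :=
    (isCompact_closedBall (0 : G m k) 1).of_isClosed_subset hS_closed hS_sub
  have hS_ne : S.Nonempty := by
    refine ⟨((EuclideanSpace.single (⟨0, hm⟩ : Fin m) (1:ℝ)), 0), ?_⟩
    show rho _ = 1
    simp [rho, EuclideanSpace.norm_single]
  obtain ⟨x₀, hx₀S, hx₀⟩ := hS_cpt.exists_isMinOn hS_ne hnrm.continuous.continuousOn
  obtain ⟨x₁, hx₁S, hx₁⟩ := hS_cpt.exists_isMaxOn hS_ne hnrm.continuous.continuousOn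
  have hx₀pos : 0 < nrm x₀ := by
    apply nrm_pos hnrm
    intro h
    have : rho x₀ = 1 := hx₀S
    rw [h] at this
    simp [rho] at this
  refine ⟨min (nrm x₀) 1, max (nrm x₁) 1, lt_min hx₀pos one_pos, min_le_right _ _,
    le_max_right _ _, fun p => ?_⟩
  by_cases hp : p = 0
  · subst hp
    have h0 : nrm 0 = 0 := (hnrm.eq_zero_iff 0).mpr rfl
    have hr0 : rho (0 : G m k) = 0 := (rho_eq_zero_iff 0).mpr rfl
    rw [h0, hr0]
    simp
  · have ht : 0 < rho p :=
      lt_of_le_of_ne (rho_nonneg p) (fun h => hp ((rho_eq_zero_iff p).mp h.symm))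
    set t := rho p with htdef
    set u := dil t⁻¹ p with hudef
    have hu : rho u = 1 := by
      rw [hudef, rho_dil, abs_of_pos (inv_pos.mpr ht), inv_mul_cancel₀ ht.ne']
    have huS : u ∈ S := hu
    have hpu : p = dil t u := by
      rw [hudef, dil_dil, mul_inv_cancel₀ ht.ne', dil_one]
    have hnp : nrm p = t * nrm u := by
      rw [hpu, hnrm.dil_eq, abs_of_pos ht]
    constructor
    · rw [hnp]
      have h1 : min (nrm x₀) 1 ≤ nrm u := le_trans (min_le_left _ _) (hx₀ huS)
      nlinarith
    · rw [hnp]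
      have h1 : nrm u ≤ max (nrm x₁) 1 := le_trans (hx₁ huS) (le_max_left _ _)
      nlinarith

lemma le_of_sq_le_sq {a b : ℝ} (ha : 0 ≤ a) (hb : 0 ≤ b) (h : a ^ 2 ≤ b ^ 2) : a ≤ b := by
  nlinarith

set_option maxHeartbeats 4000000 in
/-- Standard Hölder estimates for a Calderón–Zygmund kernel with
exponent `β/2` (Lemma on `K(q⁻¹·p)` and the adjoint kernel). -/
theorem statement11 {m k d : ℕ} (hm : 2 ≤ m) (hk : 1 ≤ k)
    (ω : Br m k) (hω : IsBracket ω)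
    (nrm : G m k → ℝ) (hnrm : IsStrongHomNorm nrm)
    (K : G m k → EuclideanSpace ℝ (Fin d)) (κ β CK : ℝ)
    (hK : IsCZKernel ω nrm K κ β CK) :
    ∃ C : ℝ, 1 ≤ C ∧ ∃ C' : ℝ, 0 < C' ∧
      ∀ q p₁ p₂ : G m k, p₁ ≠ q → p₂ ≠ q →
        dist' ω nrm p₁ p₂ ≤ dist' ω nrm p₁ q / C →
        ‖K (gmul ω (ginv q) p₁) - K (gmul ω (ginv q) p₂)‖ +
            ‖K (gmul ω (ginv p₁) q) - K (gmul ω (ginv p₂) q)‖ ≤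
          C' * nrm (gmul ω (ginv p₂) p₁) ^ (β / 2) /
            nrm (gmul ω (ginv q) p₁) ^ (homDim m k - 1 + β / 2) := by
  classical
  obtain ⟨M, hM1, hM⟩ := br_bound ω
  obtain ⟨A, B, hA0, hA1, hB1, hAB⟩ := nrm_comp (by omega : 0 < m) nrm hnrm
  have halt := hω.1
  obtain ⟨hκ0, hκ1⟩ := hK.kappa_mem
  obtain ⟨hβ0, hβ1⟩ := hK.beta_mem
  have hCK1 := hK.one_le
  have hM0 : (0:ℝ) ≤ M := by linarith only [hM1]
  have hCK0 : (0:ℝ) ≤ CK := by linarith only [hCK1]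
  have hQ3 : (3:ℝ) ≤ homDim m k - 1 := by
    have h1 : (2:ℝ) ≤ (m:ℝ) := by exact_mod_cast hm
    have h2 : (1:ℝ) ≤ (k:ℝ) := by exact_mod_cast hk
    simp only [homDim]; linarith only [h1, h2]
  obtain ⟨E, hEdef⟩ : ∃ x : ℝ, x = B / A := ⟨_, rfl⟩
  have hE0 : 0 < E := hEdef ▸ div_pos (by linarith only [hB1]) hA0
  have hAE : E * A = B := by rw [hEdef]; field_simp
  have hE1 : 1 ≤ E := by nlinarith only [hAE, hB1, hA1, hA0]
  obtain ⟨D, hDdef⟩ : ∃ x : ℝ, x = B * (1 + 4 * M) / A := ⟨_, rfl⟩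
  have hD0 : 0 < D := hDdef ▸ div_pos (by nlinarith only [hB1, hM1]) hA0
  have hAD : D * A = B * (1 + 4 * M) := by rw [hDdef]; field_simp
  have hD1 : 1 ≤ D := by nlinarith only [hAD, hB1, hA1, hA0, hM1]
  obtain ⟨C, hCdef⟩ : ∃ x : ℝ, x = (D * E / κ) ^ 2 + 1 / κ + E + 1 := ⟨_, rfl⟩
  have hκinv : 0 < 1 / κ := one_div_pos.mpr hκ0
  have hC1 : 1 ≤ C := by
    rw [hCdef]; linarith only [sq_nonneg (D * E / κ), hκinv, hE1]
  have hC0 : 0 < C := by linarith only [hC1]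
  have hC'pos : 0 < CK * (1 + D ^ β * E ^ (homDim m k - 1 + β)) := by
    have h1 : (0:ℝ) < D ^ β := Real.rpow_pos_of_pos hD0 _
    have h2 : (0:ℝ) < E ^ (homDim m k - 1 + β) := Real.rpow_pos_of_pos hE0 _
    nlinarith only [mul_pos h1 h2, hCK1]
  refine ⟨C, hC1, CK * (1 + D ^ β * E ^ (homDim m k - 1 + β)), hC'pos, ?_⟩
  intro q p₁ p₂ hp₁ hp₂ hle
  simp only [dist'] at hle
  by_cases hpp : p₁ = p₂
  · rw [hpp, gmul_ginv_self ω halt p₂]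
    have h00 : nrm (0 : G m k) = 0 := (hnrm.eq_zero_iff 0).mpr rfl
    rw [h00, Real.zero_rpow (half_pos hβ0).ne']
    simp [sub_self]
  obtain ⟨v, hvdef⟩ : ∃ x : G m k, x = gmul ω (ginv p₂) p₁ := ⟨_, rfl⟩
  obtain ⟨a1, ha1def⟩ : ∃ x : G m k, x = gmul ω (ginv q) p₁ := ⟨_, rfl⟩
  obtain ⟨b1, hb1def⟩ : ∃ x : G m k, x = gmul ω (ginv q) p₂ := ⟨_, rfl⟩
  obtain ⟨a2, ha2def⟩ : ∃ x : G m k, x = gmul ω (ginv p₁) q := ⟨_, rfl⟩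
  obtain ⟨b2, hb2def⟩ : ∃ x : G m k, x = gmul ω (ginv p₂) q := ⟨_, rfl⟩
  rw [← hvdef, ← ha1def] at hle
  rw [← hvdef, ← ha1def, ← hb1def, ← ha2def, ← hb2def]
  obtain ⟨s, hsdef⟩ : ∃ x : ℝ, x = nrm v := ⟨_, rfl⟩
  obtain ⟨r, hrdef⟩ : ∃ x : ℝ, x = nrm a1 := ⟨_, rfl⟩
  rw [← hsdef, ← hrdef] at hle ⊢
  have ha1ne : a1 ≠ 0 := by
    rw [ha1def]; exact fun h => hp₁ ((gmul_ginv_eq_zero_iff ω halt p₁ q).mp h)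
  have hb1ne : b1 ≠ 0 := by
    rw [hb1def]; exact fun h => hp₂ ((gmul_ginv_eq_zero_iff ω halt p₂ q).mp h)
  have hvne : v ≠ 0 := by
    rw [hvdef]; exact fun h => hpp ((gmul_ginv_eq_zero_iff ω halt p₁ p₂).mp h)
  have ha2ne : a2 ≠ 0 := by
    rw [ha2def]; exact fun h => hp₁ (((gmul_ginv_eq_zero_iff ω halt q p₁).mp h).symm)
  have hb2ne : b2 ≠ 0 := by
    rw [hb2def]; exact fun h => hp₂ (((gmul_ginv_eq_zero_iff ω halt q p₂).mp h).symm)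
  have hr : 0 < r := hrdef ▸ nrm_pos hnrm ha1ne
  have hs : 0 < s := hsdef ▸ nrm_pos hnrm hvne
  have hs0 : 0 ≤ s := hs.le
  have hsC : s * C ≤ r := (le_div_iff₀ hC0).mp hle
  have hsr : s ≤ r := by
    linarith only [mul_le_mul_of_nonneg_left hC1 hs0, hsC]
  obtain ⟨R, hRdef⟩ : ∃ x : ℝ, x = rho a1 := ⟨_, rfl⟩
  obtain ⟨S, hSdef⟩ : ∃ x : ℝ, x = rho v := ⟨_, rfl⟩
  have hRa : A * R ≤ r := by rw [hRdef, hrdef]; exact (hAB a1).1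
  have hRb : r ≤ B * R := by rw [hRdef, hrdef]; exact (hAB a1).2
  have hSa : A * S ≤ s := by rw [hSdef, hsdef]; exact (hAB v).1
  have hSb : s ≤ B * S := by rw [hSdef, hsdef]; exact (hAB v).2
  have hR0 : 0 < R := by nlinarith only [hRb, hr, hB1]
  have hS0 : 0 < S := by nlinarith only [hSb, hs, hB1]
  have hCE : E ≤ C := by
    rw [hCdef]; linarith only [sq_nonneg (D * E / κ), hκinv]
  have hSR : S ≤ R := by
    have hBAC : B ≤ A * C := by
      linarith only [mul_le_mul_of_nonneg_right hCE hA0.le, hAE]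
    have h2 : A * C * S ≤ B * R := by
      linarith only [mul_le_mul_of_nonneg_right hSa hC0.le, hsC, hRb]
    have h3 : B * R ≤ A * C * R := by
      linarith only [mul_le_mul_of_nonneg_right hBAC hR0.le]
    exact le_of_mul_le_mul_left (by linarith only [h2, h3] : A * C * S ≤ A * C * R)
      (mul_pos hA0 hC0)
  -- Term 1
  have hI1 : gmul ω (ginv b1) a1 = v := by
    rw [hvdef, ha1def, hb1def]; exact gmul_cancel_left ω halt q p₁ p₂
  have hCκ : 1 ≤ κ * C := by
    have hh : κ * (1 / κ) = 1 := by field_simp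
    rw [hCdef]
    nlinarith only [hh, sq_nonneg (D * E / κ), hE1, hκ0]
  have hcond1 : nrm (gmul ω (ginv b1) a1) ≤ κ * nrm a1 := by
    rw [hI1, ← hsdef, ← hrdef]
    linarith only [mul_le_mul_of_nonneg_left hsC hκ0.le,
      mul_le_mul_of_nonneg_left hCκ hs0]
  have ht1 := hK.holder a1 b1 ha1ne hb1ne hcond1
  rw [hI1, ← hsdef, ← hrdef] at ht1
  -- Term 2
  have ha2e : a2 = ginv a1 := by
    rw [ha2def, ha1def]; exact gmul_ginv_comm ω halt p₁ q
  have hna2pos : 0 < nrm a2 := nrm_pos hnrm ha2ne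
  have hRa2a : A * R ≤ nrm a2 := by
    have hh : rho a2 = R := by rw [ha2e, rho_ginv, hRdef]
    rw [← hh]; exact (hAB a2).1
  obtain ⟨w, hwdef⟩ : ∃ x : G m k, x = gmul ω (ginv b2) a2 := ⟨_, rfl⟩
  have hI4 : w = (-(v.1), -(v.2) + (2:ℝ) • ω v.1 (p₂.1 - q.1)) := by
    rw [hwdef, hb2def, ha2def, hvdef]; exact gmul_adj ω halt q p₁ p₂
  obtain ⟨X, hXdef⟩ : ∃ x : ℝ, x = Real.sqrt (s * r) := ⟨_, rfl⟩
  have hX0 : 0 ≤ X := hXdef ▸ Real.sqrt_nonneg _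
  have hX2 : X ^ 2 = s * r := by
    rw [hXdef]; exact Real.sq_sqrt (mul_nonneg hs0 hr.le)
  have hv1S : ‖v.1‖ ≤ S := hSdef ▸ norm_fst_le_rho v
  have hv2S : ‖v.2‖ ≤ S ^ 2 := by rw [hSdef]; exact norm_snd_le_rho_sq v
  have hdiff : ‖p₂.1 - q.1‖ ≤ S + R := by
    have he : p₂.1 - q.1 = -(v.1) + a1.1 := by
      rw [hvdef, ha1def]
      simp only [gmul, ginv]
      abel
    rw [he]
    calc ‖-(v.1) + a1.1‖ ≤ ‖-(v.1)‖ + ‖a1.1‖ := norm_add_le _ _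
      _ = ‖v.1‖ + ‖a1.1‖ := by rw [norm_neg]
      _ ≤ S + R := add_le_add hv1S (hRdef ▸ norm_fst_le_rho a1)
  have hw1 : ‖w.1‖ = ‖v.1‖ := by rw [hI4]; exact norm_neg _
  have hw2 : ‖w.2‖ ≤ (1 + 4 * M) * S * R := by
    have h1 : ‖w.2‖ ≤ ‖v.2‖ + 2 * ‖ω v.1 (p₂.1 - q.1)‖ := by
      rw [hI4]
      calc ‖-(v.2) + (2:ℝ) • ω v.1 (p₂.1 - q.1)‖
          ≤ ‖-(v.2)‖ + ‖(2:ℝ) • ω v.1 (p₂.1 - q.1)‖ := norm_add_le _ _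
        _ = ‖v.2‖ + 2 * ‖ω v.1 (p₂.1 - q.1)‖ := by
            rw [norm_neg, norm_smul, Real.norm_eq_abs]; norm_num
    have h2 : ‖ω v.1 (p₂.1 - q.1)‖ ≤ M * S * (S + R) := by
      calc ‖ω v.1 (p₂.1 - q.1)‖ ≤ M * ‖v.1‖ * ‖p₂.1 - q.1‖ := hM _ _
        _ ≤ M * S * (S + R) := by
            have hn2 : (0:ℝ) ≤ ‖p₂.1 - q.1‖ := norm_nonneg _
            have hp1 : ‖v.1‖ * ‖p₂.1 - q.1‖ ≤ S * (S + R) :=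
              mul_le_mul hv1S hdiff hn2 hS0.le
            linarith only [mul_le_mul_of_nonneg_left hp1 hM0]
    have hint1 : S * S ≤ S * R := mul_le_mul_of_nonneg_left hSR hS0.le
    have hint2 : M * S * (S + R) ≤ M * S * (2 * R) :=
      mul_le_mul_of_nonneg_left (by linarith only [hSR] : S + R ≤ 2 * R)
        (mul_nonneg hM0 hS0.le)
    linarith only [h1, h2, hv2S, hint1, hint2]
  have hrw2 : rho w ^ 2 ≤ (1 + 4 * M) * S * R := by
    rcases max_choice ‖w.1‖ (Real.sqrt ‖w.2‖) with h | h
    · have hh : rho w = ‖w.1‖ := h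
      rw [hh, hw1]
      have hint1 : ‖v.1‖ * ‖v.1‖ ≤ S * S := mul_self_le_mul_self (norm_nonneg _) hv1S
      have hint2 : S * S ≤ S * R := mul_le_mul_of_nonneg_left hSR hS0.le
      have hint3 : (0:ℝ) ≤ 4 * M * S * R := by positivity
      linarith only [hint1, hint2, hint3]
    · have hh : rho w = Real.sqrt ‖w.2‖ := h
      rw [hh, Real.sq_sqrt (norm_nonneg _)]
      exact hw2
  have hAρ : A * rho w ≤ (1 + 4 * M) * X := by
    apply le_of_sq_le_sq (mul_nonneg hA0.le (rho_nonneg w))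
      (mul_nonneg (by linarith only [hM0]) hX0)
    have h2 : ((1 + 4 * M) * X) ^ 2 = (1 + 4 * M) ^ 2 * (s * r) := by
      rw [mul_pow, hX2]
    have h3 : (A * S) * (A * R) ≤ s * r :=
      mul_le_mul hSa hRa (mul_nonneg hA0.le hR0.le) hs0
    rw [h2]
    have hint1 := mul_le_mul_of_nonneg_left hrw2 (sq_nonneg A)
    have hint2 : (1 + 4 * M) * ((A * S) * (A * R)) ≤ (1 + 4 * M) * (s * r) :=
      mul_le_mul_of_nonneg_left h3 (by linarith only [hM0])
    have hint3 : (0:ℝ) ≤ (s * r) * ((1 + 4 * M) * (4 * M)) :=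
      mul_nonneg (mul_nonneg hs0 hr.le) (by nlinarith only [hM0])
    linarith only [hint1, hint2, hint3]
  have hwb : nrm w ≤ B * rho w := (hAB w).2
  have hnw : nrm w ≤ D * X := by
    have h1 : A * nrm w ≤ A * (B * rho w) := mul_le_mul_of_nonneg_left hwb hA0.le
    have h3 : B * (A * rho w) ≤ B * ((1 + 4 * M) * X) :=
      mul_le_mul_of_nonneg_left hAρ (by linarith only [hB1])
    have h4 : B * ((1 + 4 * M) * X) = (D * A) * X := by rw [hAD]; ring
    have h5 : A * nrm w ≤ A * (D * X) := by linarith only [h1, h3, h4]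
    exact le_of_mul_le_mul_left h5 hA0
  have hDEX : D * E * X ≤ κ * r := by
    apply le_of_sq_le_sq (mul_nonneg (mul_nonneg hD0.le hE0.le) hX0)
      (mul_nonneg hκ0.le hr.le)
    have hC2 : (D * E / κ) ^ 2 ≤ C := by
      rw [hCdef]; linarith only [hκinv, hE1]
    have h7 : κ ^ 2 * (D * E / κ) ^ 2 = (D * E) ^ 2 := by field_simp
    have h8 : (D * E) ^ 2 ≤ κ ^ 2 * C := by
      linarith only [mul_le_mul_of_nonneg_left hC2 (sq_nonneg κ), h7]
    have h9 : s * r * C ≤ r * r := by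
      linarith only [mul_le_mul_of_nonneg_left hsC hr.le]
    have h10 : (D * E * X) ^ 2 = (D * E) ^ 2 * (s * r) := by rw [mul_pow, hX2]
    have h11 : (κ * r) ^ 2 = κ ^ 2 * (r * r) := by ring
    rw [h10, h11]
    linarith only [mul_le_mul_of_nonneg_right h8 (mul_nonneg hs0 hr.le),
      mul_le_mul_of_nonneg_left h9 (sq_nonneg κ)]
  have hcond2 : nrm (gmul ω (ginv b2) a2) ≤ κ * nrm a2 := by
    rw [← hwdef]
    have h1 : E * nrm w ≤ E * (D * X) := mul_le_mul_of_nonneg_left hnw hE0.le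
    have h3 : κ * r ≤ κ * (B * R) := mul_le_mul_of_nonneg_left hRb hκ0.le
    have h4 : κ * (B * R) = E * (κ * (A * R)) := by rw [← hAE]; ring
    have h5 : E * (κ * (A * R)) ≤ E * (κ * nrm a2) :=
      mul_le_mul_of_nonneg_left (mul_le_mul_of_nonneg_left hRa2a hκ0.le) hE0.le
    have h6 : E * nrm w ≤ E * (κ * nrm a2) := by
      linarith only [h1, h3, h4, h5, hDEX]
    exact le_of_mul_le_mul_left h6 hE0
  have ht2 := hK.holder a2 b2 ha2ne hb2ne hcond2
  rw [← hwdef] at ht2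
  -- assembling the two bounds
  have hXβ : X ^ β = s ^ (β / 2) * r ^ (β / 2) := by
    rw [hXdef, Real.sqrt_eq_rpow, ← Real.rpow_mul (mul_nonneg hs0 hr.le)]
    rw [show (1/2 : ℝ) * β = β / 2 by ring]
    exact Real.mul_rpow hs0 hr.le
  have e2 : r ^ (homDim m k - 1 + β) = r ^ (homDim m k - 1 + β / 2) * r ^ (β / 2) := by
    rw [← Real.rpow_add hr]; ring_nf
  have e3 : s ^ (β / 2) ≤ r ^ (β / 2) := Real.rpow_le_rpow hs0 hsr (half_pos hβ0).le
  have hr1 : (0:ℝ) < r ^ (homDim m k - 1 + β / 2) := Real.rpow_pos_of_pos hr _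
  have hr2 : (0:ℝ) < r ^ (β / 2) := Real.rpow_pos_of_pos hr _
  have hr3 : (0:ℝ) < r ^ (homDim m k - 1 + β) := Real.rpow_pos_of_pos hr _
  have hE2 : (0:ℝ) < E ^ (homDim m k - 1 + β) := Real.rpow_pos_of_pos hE0 _
  have hDβ : (0:ℝ) < D ^ β := Real.rpow_pos_of_pos hD0 _
  have hs2 : (0:ℝ) ≤ s ^ (β / 2) := (Real.rpow_pos_of_pos hs _).le
  have hb1' : CK * s ^ β / r ^ (homDim m k - 1 + β) ≤
      CK * s ^ (β / 2) / r ^ (homDim m k - 1 + β / 2) := by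
    have e1 : s ^ (β : ℝ) = s ^ (β / 2) * s ^ (β / 2) := by
      rw [← Real.rpow_add hs]; ring_nf
    rw [e1, e2]
    calc CK * (s ^ (β/2) * s ^ (β/2)) / (r ^ (homDim m k - 1 + β/2) * r ^ (β/2))
        = (CK * s ^ (β/2) / r ^ (homDim m k - 1 + β/2)) * (s ^ (β/2) / r ^ (β/2)) := by
          ring
      _ ≤ (CK * s ^ (β/2) / r ^ (homDim m k - 1 + β/2)) * 1 := by
          apply mul_le_mul_of_nonneg_left ((div_le_one hr2).mpr e3)
          exact div_nonneg (mul_nonneg hCK0 hs2) hr1.le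
      _ = CK * s ^ (β/2) / r ^ (homDim m k - 1 + β/2) := mul_one _
  have hnum : nrm w ^ β ≤ D ^ β * (s ^ (β / 2) * r ^ (β / 2)) := by
    calc nrm w ^ β ≤ (D * X) ^ β :=
          Real.rpow_le_rpow (hnrm.nonneg w) hnw (le_of_lt hβ0)
      _ = D ^ β * X ^ β := Real.mul_rpow hD0.le hX0
      _ = _ := by rw [hXβ]
  have hrE : r / E ≤ nrm a2 := by
    rw [div_le_iff₀ hE0]
    have hEAR : E * A * R = B * R := by rw [hAE]
    linarith only [mul_le_mul_of_nonneg_right hRa2a hE0.le, hRb, hEAR]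
  have hden : r ^ (homDim m k - 1 + β) / E ^ (homDim m k - 1 + β) ≤
      nrm a2 ^ (homDim m k - 1 + β) := by
    rw [← Real.div_rpow hr.le hE0.le]
    exact Real.rpow_le_rpow (le_of_lt (div_pos hr hE0)) hrE
      (by linarith only [hQ3, hβ0])
  have hb2' : CK * nrm w ^ β / nrm a2 ^ (homDim m k - 1 + β) ≤
      CK * D ^ β * E ^ (homDim m k - 1 + β) * s ^ (β / 2) / r ^ (homDim m k - 1 + β / 2) := by
    have step1 : CK * nrm w ^ β / nrm a2 ^ (homDim m k - 1 + β) ≤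
        (CK * (D ^ β * (s ^ (β/2) * r ^ (β/2)))) /
          (r ^ (homDim m k - 1 + β) / E ^ (homDim m k - 1 + β)) := by
      apply div_le_div₀
        (mul_nonneg hCK0 (mul_nonneg hDβ.le (mul_nonneg hs2 hr2.le)))
        (mul_le_mul_of_nonneg_left hnum hCK0)
        (div_pos hr3 hE2) hden
    refine le_trans step1 (le_of_eq ?_)
    rw [e2]
    field_simp
  calc ‖K a1 - K b1‖ + ‖K a2 - K b2‖
      ≤ CK * s ^ β / r ^ (homDim m k - 1 + β) +
        CK * nrm w ^ β / nrm a2 ^ (homDim m k - 1 + β) := add_le_add ht1 ht2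
    _ ≤ CK * s ^ (β/2) / r ^ (homDim m k - 1 + β/2) +
        CK * D ^ β * E ^ (homDim m k - 1 + β) * s ^ (β/2) / r ^ (homDim m k - 1 + β/2) :=
          add_le_add hb1' hb2'
    _ = CK * (1 + D ^ β * E ^ (homDim m k - 1 + β)) * s ^ (β/2) /
          r ^ (homDim m k - 1 + β/2) := by ring


end Carnot2
end
end

section
/- Let G be a step-2 Carnot group (as in the context) with a homogeneous norm ‖·‖ and d(p,q) = ‖q^{-1}·p‖. There exists a constant C ≥ 1, depending only on ω and ‖·‖, such that for all w₁, w₂ ∈ G one has d(w₁^{-1}, w₂^{-1}) = ‖w₂·w₁^{-1}‖ ≤ C·( d(w₁,w₂) + d(w₁,w₂)^{1/2}·‖w₁‖^{1/2} ). -/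
set_option linter.unusedVariables false
open MeasureTheory
open scoped ENNReal NNReal Topology

noncomputable section

namespace Carnot2

variable {m k d : ℕ}

/-! ### Auxiliary lemmas for statement 12 -/

lemma aux_sqrt_add_le {x y : ℝ} (hx : 0 ≤ x) (hy : 0 ≤ y) :
    Real.sqrt (x + y) ≤ Real.sqrt x + Real.sqrt y := by
  have h : Real.sqrt (x + y) ≤ Real.sqrt ((Real.sqrt x + Real.sqrt y) ^ 2) :=
    Real.sqrt_le_sqrt (by
      nlinarith [Real.sq_sqrt hx, Real.sq_sqrt hy, Real.sqrt_nonneg x, Real.sqrt_nonneg y])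
  rwa [Real.sqrt_sq (by positivity)] at h

lemma aux_br_bound {m k : ℕ} (ω : Br m k) :
    ∃ Cb : ℝ, 1 ≤ Cb ∧ ∀ u v, ‖ω u v‖ ≤ Cb * ‖u‖ * ‖v‖ := by
  let L : EuclideanSpace ℝ (Fin m) →ₗ[ℝ]
      (EuclideanSpace ℝ (Fin m) →L[ℝ] EuclideanSpace ℝ (Fin k)) :=
    { toFun := fun u => LinearMap.toContinuousLinearMap (ω u)
      map_add' := by intro a b; ext v; simp
      map_smul' := by intro a b; ext v; simp }
  let B := LinearMap.toContinuousLinearMap L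
  refine ⟨max 1 ‖B‖, le_max_left _ _, fun u v => ?_⟩
  have h := B.le_opNorm₂ u v
  have he : ‖ω u v‖ = ‖B u v‖ := rfl
  rw [he]
  calc ‖B u v‖ ≤ ‖B‖ * ‖u‖ * ‖v‖ := h
  _ ≤ max 1 ‖B‖ * ‖u‖ * ‖v‖ := by gcongr; exact le_max_right _ _

lemma aux_br_antisymm {m k : ℕ} (ω : Br m k) (h : ∀ u, ω u u = 0)
    (u v : EuclideanSpace ℝ (Fin m)) : ω u v = - ω v u := by
  have h2 := h (u + v)
  simp only [map_add, LinearMap.add_apply, h u, h v] at h2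
  have : ω u v + ω v u = 0 := by
    rw [← h2]; abel
  linear_combination (norm := module) this

lemma aux_nrmK_nonneg {m k : ℕ} (p : G m k) : 0 ≤ nrmK p :=
  add_nonneg (norm_nonneg _) (Real.sqrt_nonneg _)

lemma aux_nrmK_eq_zero {m k : ℕ} (p : G m k) : nrmK p = 0 ↔ p = 0 := by
  unfold nrmK
  constructor
  · intro h
    have h1 : ‖p.1‖ = 0 := le_antisymm (by nlinarith [Real.sqrt_nonneg ‖p.2‖, norm_nonneg p.1]) (norm_nonneg _)
    have h2 : Real.sqrt ‖p.2‖ = 0 := by linarith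
    have h2' : ‖p.2‖ = 0 := by
      have := Real.sqrt_eq_zero (norm_nonneg p.2) |>.mp h2
      exact this
    have e1 : p.1 = 0 := norm_eq_zero.mp h1
    have e2 : p.2 = 0 := norm_eq_zero.mp h2'
    exact Prod.ext e1 e2
  · rintro rfl
    simp [Prod.fst_zero, Prod.snd_zero]

lemma aux_nrmK_dil {m k : ℕ} {t : ℝ} (ht : 0 < t) (p : G m k) :
    nrmK (dil t p) = t * nrmK p := by
  unfold nrmK dil
  simp only [norm_smul, Real.norm_eq_abs, abs_of_pos ht, abs_of_pos (pow_pos ht 2)]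
  rw [Real.sqrt_mul (by positivity), Real.sqrt_sq ht.le]
  ring

lemma aux_nrmK_continuous {m k : ℕ} : Continuous (nrmK : G m k → ℝ) := by
  unfold nrmK
  exact (continuous_fst.norm).add (Real.continuous_sqrt.comp continuous_snd.norm)

lemma aux_dil_dil {m k : ℕ} (t s : ℝ) (p : G m k) :
    dil t (dil s p) = dil (t * s) p := by
  unfold dil
  simp only [smul_smul, mul_pow]

/-- Norm equivalence between `nrm` and `nrmK`. -/
lemma aux_equiv {m k : ℕ} (hm : 0 < m) (nrm : G m k → ℝ) (hnrm : IsHomNorm nrm) :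
    ∃ a b : ℝ, 0 < a ∧ 0 < b ∧ ∀ p : G m k, a * nrmK p ≤ nrm p ∧ nrm p ≤ b * nrmK p := by
  set S : Set (G m k) := nrmK ⁻¹' {1} with hS
  have hScomp : IsCompact S := by
    apply Metric.isCompact_of_isClosed_isBounded
    · exact isClosed_singleton.preimage aux_nrmK_continuous
    · rw [Metric.isBounded_iff_subset_closedBall 0]
      refine ⟨1, fun p hp => ?_⟩
      have h1 : nrmK p = 1 := hp
      have hp1 : ‖p.1‖ ≤ 1 := by
        have := Real.sqrt_nonneg ‖p.2‖; unfold nrmK at h1; linarith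
      have hp2 : ‖p.2‖ ≤ 1 := by
        have hs : Real.sqrt ‖p.2‖ ≤ 1 := by
          have := norm_nonneg p.1; unfold nrmK at h1; linarith
        nlinarith [Real.sq_sqrt (norm_nonneg p.2), Real.sqrt_nonneg ‖p.2‖]
      simp only [Metric.mem_closedBall, dist_zero_right]
      rw [Prod.norm_def]
      exact max_le hp1 hp2
  have hSne : S.Nonempty := by
    refine ⟨(e1 m, 0), ?_⟩
    have : ‖e1 m‖ = 1 := by
      unfold e1
      rw [dif_pos hm]
      simp [EuclideanSpace.norm_single]
    simp [hS, nrmK, this]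
  obtain ⟨pa, hpaS, hpa⟩ := hScomp.exists_isMinOn hSne (hnrm.continuous.continuousOn)
  obtain ⟨pb, hpbS, hpb⟩ := hScomp.exists_isMaxOn hSne (hnrm.continuous.continuousOn)
  have hpa0 : 0 < nrm pa := by
    rcases (hnrm.nonneg pa).lt_or_eq with h | h
    · exact h
    · exfalso
      have : pa = 0 := (hnrm.eq_zero_iff pa).mp h.symm
      rw [this] at hpaS
      have : nrmK (0 : G m k) = 1 := hpaS
      rw [(aux_nrmK_eq_zero (0 : G m k)).mpr rfl] at this
      norm_num at this
  refine ⟨nrm pa, nrm pb, hpa0, lt_of_lt_of_le hpa0 (hpa hpbS), fun p => ?_⟩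
  by_cases hp : p = 0
  · subst hp
    rw [(aux_nrmK_eq_zero (0 : G m k)).mpr rfl, (hnrm.eq_zero_iff 0).mpr rfl]
    simp
  · set t := nrmK p with ht
    have ht0 : 0 < t := lt_of_le_of_ne (aux_nrmK_nonneg p)
      (fun h => hp ((aux_nrmK_eq_zero p).mp h.symm))
    set q := dil t⁻¹ p with hq
    have hqS : q ∈ S := by
      have : nrmK q = t⁻¹ * t := aux_nrmK_dil (by positivity) p
      simp only [hS, Set.mem_preimage, Set.mem_singleton_iff]
      rw [this, inv_mul_cancel₀ ht0.ne']
    have hpq : p = dil t q := by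
      rw [hq, aux_dil_dil, mul_inv_cancel₀ ht0.ne']
      unfold dil; simp
    have hnp : nrm p = t * nrm q := by
      rw [hpq] at *
      exact hnrm.dil_eq t ht0 q
    constructor
    · rw [hnp]
      have := hpa hqS
      calc nrm pa * t = t * nrm pa := by ring
      _ ≤ t * nrm q := by
          exact mul_le_mul_of_nonneg_left this ht0.le
    · rw [hnp]
      have := hpb hqS
      calc t * nrm q ≤ t * nrm pb := mul_le_mul_of_nonneg_left this ht0.le
      _ = nrm pb * t := by ring

/-- Quasi-metric estimate for inverses:
`d(w₁⁻¹, w₂⁻¹) = ‖w₂·w₁⁻¹‖ ≤ C(d(w₁,w₂) + d(w₁,w₂)^{1/2}‖w₁‖^{1/2})`. -/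
theorem statement12 {m k : ℕ} (hm : 2 ≤ m) (hk : 1 ≤ k)
    (ω : Br m k) (hω : IsBracket ω)
    (nrm : G m k → ℝ) (hnrm : IsHomNorm nrm) :
    ∃ C : ℝ, 1 ≤ C ∧ ∀ w₁ w₂ : G m k,
      dist' ω nrm (ginv w₁) (ginv w₂) = nrm (gmul ω w₂ (ginv w₁)) ∧
      nrm (gmul ω w₂ (ginv w₁)) ≤
        C * (dist' ω nrm w₁ w₂ +
          Real.sqrt (dist' ω nrm w₁ w₂) * Real.sqrt (nrm w₁)) := by
  obtain ⟨Cb, hCb1, hCb⟩ := aux_br_bound ω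
  obtain ⟨a, b, ha, hb, hab⟩ := aux_equiv (by omega) nrm hnrm
  set C : ℝ := max 1 ((b / a) * max 1 (Real.sqrt (2 * Cb))) with hC
  have hC1 : (1 : ℝ) ≤ C := le_max_left _ _
  refine ⟨C, hC1, fun w₁ w₂ => ?_⟩
  have halt := hω.1
  constructor
  · unfold dist' ginv
    simp
  · set v : G m k := gmul ω (ginv w₂) w₁ with hv
    set p : G m k := gmul ω w₂ (ginv w₁) with hpdef
    have hA : ω w₁.1 w₂.1 = - ω w₂.1 w₁.1 := aux_br_antisymm ω halt _ _
    have hv1 : v.1 = -w₂.1 + w₁.1 := rfl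
    have hp1 : p.1 = -v.1 := by
      simp only [hpdef, hv, gmul, ginv]
      abel
    have hp2 : p.2 = -(v.2 + (2:ℝ) • ω w₁.1 v.1) := by
      have hc : ω w₁.1 v.1 = ω w₂.1 w₁.1 := by
        rw [hv1, map_add, map_neg, hA, halt]
        abel
      have hv2 : v.2 = -w₂.2 + w₁.2 + ω (-w₂.1) w₁.1 := rfl
      have hp2' : p.2 = w₂.2 + (-w₁.2) + ω w₂.1 (-w₁.1) := rfl
      rw [hp2', hv2, hc]
      simp only [map_neg, LinearMap.neg_apply]
      module
    -- quantities
    have hvK : 0 ≤ nrmK v := aux_nrmK_nonneg v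
    have hwK : 0 ≤ nrmK w₁ := aux_nrmK_nonneg w₁
    have hv1le : ‖v.1‖ ≤ nrmK v := le_add_of_nonneg_right (Real.sqrt_nonneg _)
    have hw1le : ‖w₁.1‖ ≤ nrmK w₁ := le_add_of_nonneg_right (Real.sqrt_nonneg _)
    -- nrmK estimate
    have key : nrmK p ≤ nrmK v + Real.sqrt (2 * Cb) * Real.sqrt (nrmK w₁) * Real.sqrt (nrmK v) := by
      have hnp : nrmK p = ‖v.1‖ + Real.sqrt ‖v.2 + (2:ℝ) • ω w₁.1 v.1‖ := by
        unfold nrmK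
        rw [hp1, hp2, norm_neg, norm_neg]
      rw [hnp]
      have h1 : ‖v.2 + (2:ℝ) • ω w₁.1 v.1‖ ≤ ‖v.2‖ + 2 * Cb * ‖w₁.1‖ * ‖v.1‖ := by
        calc ‖v.2 + (2:ℝ) • ω w₁.1 v.1‖ ≤ ‖v.2‖ + ‖(2:ℝ) • ω w₁.1 v.1‖ := norm_add_le _ _
        _ ≤ ‖v.2‖ + 2 * Cb * ‖w₁.1‖ * ‖v.1‖ := by
            rw [norm_smul, Real.norm_ofNat]
            have := hCb w₁.1 v.1
            nlinarith
      have h2 : Real.sqrt ‖v.2 + (2:ℝ) • ω w₁.1 v.1‖ ≤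
          Real.sqrt ‖v.2‖ + Real.sqrt (2 * Cb * ‖w₁.1‖ * ‖v.1‖) := by
        calc Real.sqrt ‖v.2 + (2:ℝ) • ω w₁.1 v.1‖
            ≤ Real.sqrt (‖v.2‖ + 2 * Cb * ‖w₁.1‖ * ‖v.1‖) := Real.sqrt_le_sqrt h1
        _ ≤ Real.sqrt ‖v.2‖ + Real.sqrt (2 * Cb * ‖w₁.1‖ * ‖v.1‖) :=
            aux_sqrt_add_le (norm_nonneg _) (by positivity)
      have h3 : Real.sqrt (2 * Cb * ‖w₁.1‖ * ‖v.1‖) ≤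
          Real.sqrt (2 * Cb) * Real.sqrt (nrmK w₁) * Real.sqrt (nrmK v) := by
        rw [Real.sqrt_mul (by positivity), Real.sqrt_mul (by positivity)]
        exact mul_le_mul (mul_le_mul_of_nonneg_left (Real.sqrt_le_sqrt hw1le)
          (Real.sqrt_nonneg _)) (Real.sqrt_le_sqrt hv1le) (Real.sqrt_nonneg _) (by positivity)
      have : ‖v.1‖ + Real.sqrt ‖v.2‖ = nrmK v := rfl
      nlinarith [Real.sqrt_nonneg ‖v.2‖]
    -- convert to nrm
    have hvd : dist' ω nrm w₁ w₂ = nrm v := rfl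
    have hvn : 0 ≤ nrm v := hnrm.nonneg v
    have hwn : 0 ≤ nrm w₁ := hnrm.nonneg w₁
    have hKv : nrmK v ≤ a⁻¹ * nrm v := by
      have h := mul_le_mul_of_nonneg_left (hab v).1 (inv_pos.mpr ha).le
      rwa [← mul_assoc, inv_mul_cancel₀ ha.ne', one_mul] at h
    have hKw : nrmK w₁ ≤ a⁻¹ * nrm w₁ := by
      have h := mul_le_mul_of_nonneg_left (hab w₁).1 (inv_pos.mpr ha).le
      rwa [← mul_assoc, inv_mul_cancel₀ ha.ne', one_mul] at h
    have ha' : (0:ℝ) ≤ a⁻¹ := by positivity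
    have sKv : Real.sqrt (nrmK v) ≤ Real.sqrt a⁻¹ * Real.sqrt (nrm v) := by
      rw [← Real.sqrt_mul ha']
      exact Real.sqrt_le_sqrt hKv
    have sKw : Real.sqrt (nrmK w₁) ≤ Real.sqrt a⁻¹ * Real.sqrt (nrm w₁) := by
      rw [← Real.sqrt_mul ha']
      exact Real.sqrt_le_sqrt hKw
    have hfin : nrm p ≤ (b / a) * nrm v +
        (b / a) * Real.sqrt (2 * Cb) * (Real.sqrt (nrm v) * Real.sqrt (nrm w₁)) := by
      have h5 : nrm p ≤ b * nrmK p := (hab p).2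
      have h6 : b * nrmK p ≤ b * (nrmK v + Real.sqrt (2 * Cb) * Real.sqrt (nrmK w₁) * Real.sqrt (nrmK v)) :=
        mul_le_mul_of_nonneg_left key hb.le
      have h7 : b * nrmK v ≤ (b / a) * nrm v := by
        rw [div_eq_mul_inv, mul_assoc]
        exact mul_le_mul_of_nonneg_left hKv hb.le
      have h8 : Real.sqrt (nrmK w₁) * Real.sqrt (nrmK v) ≤
          a⁻¹ * (Real.sqrt (nrm v) * Real.sqrt (nrm w₁)) := by
        calc Real.sqrt (nrmK w₁) * Real.sqrt (nrmK v)
            ≤ (Real.sqrt a⁻¹ * Real.sqrt (nrm w₁)) * (Real.sqrt a⁻¹ * Real.sqrt (nrm v)) := by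
              exact mul_le_mul sKw sKv (Real.sqrt_nonneg _)
                (by positivity)
        _ = (Real.sqrt a⁻¹ * Real.sqrt a⁻¹) * (Real.sqrt (nrm v) * Real.sqrt (nrm w₁)) := by ring
        _ = a⁻¹ * (Real.sqrt (nrm v) * Real.sqrt (nrm w₁)) := by
            rw [Real.mul_self_sqrt ha']
      have hs2 : (0:ℝ) ≤ Real.sqrt (2 * Cb) := Real.sqrt_nonneg _
      have h9 : b * (Real.sqrt (2 * Cb) * Real.sqrt (nrmK w₁) * Real.sqrt (nrmK v)) ≤
          (b / a) * Real.sqrt (2 * Cb) * (Real.sqrt (nrm v) * Real.sqrt (nrm w₁)) := by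
        have := mul_le_mul_of_nonneg_left h8 (by positivity : (0:ℝ) ≤ b * Real.sqrt (2 * Cb))
        calc b * (Real.sqrt (2 * Cb) * Real.sqrt (nrmK w₁) * Real.sqrt (nrmK v))
            = (b * Real.sqrt (2 * Cb)) * (Real.sqrt (nrmK w₁) * Real.sqrt (nrmK v)) := by ring
        _ ≤ (b * Real.sqrt (2 * Cb)) * (a⁻¹ * (Real.sqrt (nrm v) * Real.sqrt (nrm w₁))) := this
        _ = (b / a) * Real.sqrt (2 * Cb) * (Real.sqrt (nrm v) * Real.sqrt (nrm w₁)) := by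
            rw [div_eq_mul_inv]; ring
      calc nrm p ≤ b * nrmK p := h5
      _ ≤ b * nrmK v + b * (Real.sqrt (2 * Cb) * Real.sqrt (nrmK w₁) * Real.sqrt (nrmK v)) := by
          rw [← mul_add]; exact h6
      _ ≤ (b / a) * nrm v + (b / a) * Real.sqrt (2 * Cb) * (Real.sqrt (nrm v) * Real.sqrt (nrm w₁)) :=
          add_le_add h7 h9
    have hx0 : (0:ℝ) ≤ b / a := by positivity
    have hba : b / a ≤ C :=
      (le_mul_of_one_le_right hx0 (le_max_left _ _)).trans (le_max_right _ _)
    have hba2 : (b / a) * Real.sqrt (2 * Cb) ≤ C :=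
      (mul_le_mul_of_nonneg_left (le_max_right _ _) hx0).trans (le_max_right _ _)
    rw [hvd]
    have hsq : 0 ≤ Real.sqrt (nrm v) * Real.sqrt (nrm w₁) := by positivity
    calc nrm p ≤ (b / a) * nrm v +
        (b / a) * Real.sqrt (2 * Cb) * (Real.sqrt (nrm v) * Real.sqrt (nrm w₁)) := hfin
    _ ≤ C * nrm v + C * (Real.sqrt (nrm v) * Real.sqrt (nrm w₁)) :=
        add_le_add (mul_le_mul_of_nonneg_right hba hvn) (mul_le_mul_of_nonneg_right hba2 hsq)
    _ = C * (nrm v + Real.sqrt (nrm v) * Real.sqrt (nrm w₁)) := by ring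

end Carnot2
end
end

section
/- Let G be a step-2 Carnot group (as in the context), let W = {(x,z) ∈ G : ⟨x,e₁⟩ = 0}, and let φ ∈ C¹(W), i.e. φ is intrinsically differentiable at every point of W and the intrinsic gradient ∇^φφ: W → e₁^⊥ is continuous. Fix x ∈ e₁^⊥ ⊂ ℝ^m, u₀ ∈ ℝ and w₀ ∈ W, and let γ: ℝ → W be an absolutely continuous curve with γ(u₀) = w₀ and γ'(u) = ( x, ω( x_{γ(u)} + 2φ(γ(u))·e₁, x ) ) for all u ∈ ℝ, where x_w denotes the first-layer component of w ∈ W. Then u ↦ φ(γ(u)) is continuously differentiable with d/du φ(γ(u)) = ⟨∇^φφ(γ(u)), x⟩ for every u ∈ ℝ; in particular φ(γ(u)) = φ(w₀) + ∫_{u₀}^u ⟨∇^φφ(γ(v)), x⟩ dv for every u ∈ ℝ. -/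
set_option linter.unusedVariables false
open MeasureTheory
open scoped ENNReal NNReal Topology

noncomputable section

namespace Carnot2

variable {m k d : ℕ}

lemma nrm_zero' {m k : ℕ} {nrm : G m k → ℝ} (h : IsHomNorm nrm) : nrm 0 = 0 :=
  (h.eq_zero_iff 0).2 rfl

/-- Comparison of a homogeneous norm with the standard one `‖x‖ + √‖z‖`. -/
lemma exists_nrm_le {m k : ℕ} {nrm : G m k → ℝ} (h : IsHomNorm nrm) :
    ∃ C : ℝ, 1 ≤ C ∧ ∀ p : G m k, nrm p ≤ C * (‖p.1‖ + Real.sqrt ‖p.2‖) := by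
  have hS : IsCompact ((Metric.closedBall (0 : EuclideanSpace ℝ (Fin m)) 1) ×ˢ
      (Metric.closedBall (0 : EuclideanSpace ℝ (Fin k)) 1)) :=
    (isCompact_closedBall _ _).prod (isCompact_closedBall _ _)
  have hne : ((0, 0) : G m k) ∈ (Metric.closedBall (0 : EuclideanSpace ℝ (Fin m)) 1) ×ˢ
      (Metric.closedBall (0 : EuclideanSpace ℝ (Fin k)) 1) :=
    Set.mem_prod.2 ⟨Metric.mem_closedBall_self one_pos.le, Metric.mem_closedBall_self one_pos.le⟩
  obtain ⟨p₀, hp₀, hmax⟩ := hS.exists_isMaxOn ⟨_, hne⟩ h.continuous.continuousOn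
  refine ⟨max (nrm p₀) 1, le_max_right _ _, fun p => ?_⟩
  rcases eq_or_ne p 0 with rfl | hp
  · have h0 : nrm (0 : G m k) = 0 := nrm_zero' h
    simp [h0]
  · have h1 : (0:ℝ) ≤ ‖p.1‖ := norm_nonneg _
    have h2 : (0:ℝ) ≤ Real.sqrt ‖p.2‖ := Real.sqrt_nonneg _
    set t : ℝ := ‖p.1‖ + Real.sqrt ‖p.2‖ with ht
    have ht0 : 0 < t := by
      rcases (add_nonneg h1 h2).lt_or_eq with hlt | heq
      · exact hlt
      · exfalso; apply hp
        have e1 : ‖p.1‖ = 0 := by linarith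
        have e2 : Real.sqrt ‖p.2‖ = 0 := by linarith
        have e3 : ‖p.2‖ = 0 := by
          nlinarith [Real.sq_sqrt (norm_nonneg p.2)]
        exact Prod.ext (norm_eq_zero.1 e1) (norm_eq_zero.1 e3)
    set q : G m k := (t⁻¹ • p.1, (t⁻¹) ^ 2 • p.2) with hq
    have h3 : t * t⁻¹ = 1 := mul_inv_cancel₀ (ne_of_gt ht0)
    have hd : dil t q = p := by
      refine Prod.ext ?_ ?_
      · show t • t⁻¹ • p.1 = p.1
        rw [smul_smul, h3, one_smul]
      · show (t ^ 2) • (t⁻¹) ^ 2 • p.2 = p.2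
        rw [smul_smul, show t ^ 2 * (t⁻¹) ^ 2 = (t * t⁻¹) ^ 2 by ring, h3, one_pow, one_smul]
    have hle1 : ‖p.1‖ ≤ t := by linarith
    have hle2 : ‖p.2‖ ≤ t ^ 2 := by
      nlinarith [Real.sq_sqrt (norm_nonneg p.2)]
    have hq1 : ‖t⁻¹ • p.1‖ ≤ 1 := by
      rw [norm_smul, Real.norm_eq_abs, abs_of_pos (inv_pos.2 ht0)]
      calc t⁻¹ * ‖p.1‖ ≤ t⁻¹ * t := mul_le_mul_of_nonneg_left hle1 (inv_pos.2 ht0).le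
        _ = 1 := inv_mul_cancel₀ (ne_of_gt ht0)
    have hq2 : ‖(t⁻¹) ^ 2 • p.2‖ ≤ 1 := by
      rw [norm_smul, Real.norm_eq_abs, abs_of_pos (pow_pos (inv_pos.2 ht0) 2)]
      calc (t⁻¹) ^ 2 * ‖p.2‖ ≤ (t⁻¹) ^ 2 * t ^ 2 :=
            mul_le_mul_of_nonneg_left hle2 (pow_pos (inv_pos.2 ht0) 2).le
        _ = (t⁻¹ * t) ^ 2 := by ring
        _ = 1 := by rw [inv_mul_cancel₀ (ne_of_gt ht0)]; norm_num
    have hqS : q ∈ (Metric.closedBall (0 : EuclideanSpace ℝ (Fin m)) 1) ×ˢ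
        (Metric.closedBall (0 : EuclideanSpace ℝ (Fin k)) 1) := by
      refine Set.mem_prod.2 ⟨?_, ?_⟩
      · rw [Metric.mem_closedBall, dist_zero_right]; exact hq1
      · rw [Metric.mem_closedBall, dist_zero_right]; exact hq2
    have h5 : nrm p = t * nrm q := by rw [← hd, h.dil_eq t ht0]
    have h6 : nrm q ≤ max (nrm p₀) 1 := le_trans (hmax hqS) (le_max_left _ _)
    calc nrm p = t * nrm q := h5
      _ ≤ t * max (nrm p₀) 1 := mul_le_mul_of_nonneg_left h6 ht0.le
      _ = max (nrm p₀) 1 * t := mul_comm _ _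

/-- AM-GM for square roots: `c·√(z·M) ≤ (c²z + M)/2`. -/
lemma sqrt_amgm (c z M : ℝ) (hc : 0 ≤ c) (hz : 0 ≤ z) (hM : 0 ≤ M) :
    c * Real.sqrt (z * M) ≤ (c ^ 2 * z + M) / 2 := by
  have h1 : c * Real.sqrt (z * M) = Real.sqrt (c ^ 2 * (z * M)) := by
    rw [Real.sqrt_mul (sq_nonneg c), Real.sqrt_sq hc]
  rw [h1]
  have h2 : Real.sqrt (c ^ 2 * (z * M)) ≤ Real.sqrt (((c ^ 2 * z + M) / 2) ^ 2) := by
    apply Real.sqrt_le_sqrt; nlinarith [sq_nonneg (c ^ 2 * z - M)]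
  rwa [Real.sqrt_sq (by positivity)] at h2

set_option maxHeartbeats 1000000

/-- Integral representation of an intrinsic `C¹` graph function along
the integral curves of the projected horizontal vector fields. -/
theorem statement14 {m k : ℕ} (hm : 2 ≤ m) (hk : 1 ≤ k)
    (ω : Br m k) (hω : IsBracket ω)
    (nrm : G m k → ℝ) (hnrm : IsHomNorm nrm)
    (φ : G m k → ℝ) (gradφ : G m k → EuclideanSpace ℝ (Fin m))
    (hφ : ∀ w ∈ Wset m k, HasIntrinsicGradientAt ω nrm φ w (gradφ w))
    (hcont : ContinuousOn gradφ (Wset m k))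
    (x : EuclideanSpace ℝ (Fin m)) (hx : (inner ℝ x (e1 m) : ℝ) = 0)
    (u₀ : ℝ) (w₀ : G m k) (hw₀ : w₀ ∈ Wset m k)
    (γ : ℝ → G m k) (hγW : ∀ u, γ u ∈ Wset m k) (hγ0 : γ u₀ = w₀)
    (hγ' : ∀ u : ℝ, HasDerivAt γ
      ((x, ω ((γ u).1 + (2 * φ (γ u)) • e1 m) x) : G m k) u) :
    (∀ u : ℝ, HasDerivAt (fun v => φ (γ v)) ((inner ℝ (gradφ (γ u)) x : ℝ)) u) ∧
    Continuous (fun u : ℝ => (inner ℝ (gradφ (γ u)) x : ℝ)) ∧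
    ∀ u : ℝ, φ (γ u) = φ w₀ + ∫ v in u₀..u, (inner ℝ (gradφ (γ v)) x : ℝ) := by
  classical
  -- γ is continuous
  have hγcont : Continuous γ := by
    rw [continuous_iff_continuousAt]; exact fun u => (hγ' u).continuousAt
  -- membership equations
  have hWe : ∀ v : ℝ, (inner ℝ (γ v).1 (e1 m) : ℝ) = 0 := fun v => hγW v
  -- the first component of γ is affine
  have hγ1' : ∀ v : ℝ, HasDerivAt (fun v => (γ v).1) x v := by
    intro v
    exact (ContinuousLinearMap.fst ℝ (EuclideanSpace ℝ (Fin m))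
      (EuclideanSpace ℝ (Fin k))).hasFDerivAt.comp_hasDerivAt v (hγ' v)
  have haffine : ∀ u v : ℝ, (γ v).1 = (γ u).1 + (v - u) • x := by
    have hc : ∀ v : ℝ, HasDerivAt (fun v => (γ v).1 - v • x) 0 v := by
      intro v
      exact ((hγ1' v).sub ((hasDerivAt_id v).smul_const x)).congr_deriv (by simp)
    have hdiff : Differentiable ℝ (fun v => (γ v).1 - v • x) := fun v => (hc v).differentiableAt
    have hconst : ∀ u v : ℝ, (γ v).1 - v • x = (γ u).1 - u • x := by
      intro u v
      apply is_const_of_fderiv_eq_zero hdiff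
      intro y
      have h0 := (hc y).hasFDerivAt.fderiv
      rw [h0]
      ext w
      simp
    intro u v
    have h := hconst u v
    have h2 : (γ v).1 = (γ u).1 - u • x + v • x := by rw [← h]; abel
    rw [h2, sub_smul]; abel
  -- continuity of φ ∘ γ
  have hφγ : Continuous fun v => φ (γ v) := by
    rw [continuous_iff_continuousAt]
    intro u
    obtain ⟨hgperp, hg⟩ := hφ (γ u) (hγW u)
    obtain ⟨δ, hδ, hb⟩ := hg 1 one_pos
    set A := (γ u).1 + (2 * φ (γ u)) • e1 m with hA
    set F : ℝ → G m k := fun v => ((γ v).1 - (γ u).1,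
      (γ v).2 - (γ u).2 - ω A ((γ v).1 - (γ u).1)) with hF
    have hFcont : Continuous F := by
      have c1 : Continuous fun v => (γ v).1 - (γ u).1 :=
        (continuous_fst.comp hγcont).sub continuous_const
      have c2 : Continuous fun v => (γ v).2 - (γ u).2 :=
        (continuous_snd.comp hγcont).sub continuous_const
      have cω : Continuous (ω A) := (ω A).continuous_of_finiteDimensional
      exact c1.prodMk (c2.sub (cω.comp c1))
    have hF0 : F u = 0 := by simp [hF]
    have hFW : ∀ v, F v ∈ Wset m k := by
      intro v
      show (inner ℝ ((γ v).1 - (γ u).1) (e1 m) : ℝ) = 0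
      rw [inner_sub_left, hWe v, hWe u, sub_zero]
    have htr : ∀ v, transl ω φ (γ u) (F v) = φ (γ v) - φ (γ u) := by
      intro v
      show φ ((γ u).1 + ((γ v).1 - (γ u).1),
        (γ u).2 + ((γ v).2 - (γ u).2 - ω A ((γ v).1 - (γ u).1))
          + ω A ((γ v).1 - (γ u).1)) - φ (γ u) = φ (γ v) - φ (γ u)
      have e1' : (γ u).1 + ((γ v).1 - (γ u).1) = (γ v).1 := by abel
      have e2' : (γ u).2 + ((γ v).2 - (γ u).2 - ω A ((γ v).1 - (γ u).1))
          + ω A ((γ v).1 - (γ u).1) = (γ v).2 := by abel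
      rw [e1', e2']
    have hnF : Filter.Tendsto (fun v => nrm (F v)) (𝓝 u) (𝓝 0) := by
      have := (hnrm.continuous.comp hFcont).tendsto u
      simp only [Function.comp_apply, hF0, nrm_zero' hnrm] at this
      exact this
    have hev : ∀ᶠ v in 𝓝 u, |φ (γ v) - φ (γ u)| ≤
        ‖gradφ (γ u)‖ * ‖(F v).1‖ + nrm (F v) := by
      filter_upwards [hnF.eventually_lt_const hδ] with v hv
      have hb' := hb (F v) (hFW v) hv
      have habs : |transl ω φ (γ u) (F v)| ≤ |(inner ℝ (gradφ (γ u)) (F v).1 : ℝ)| +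
          |transl ω φ (γ u) (F v) - (inner ℝ (gradφ (γ u)) (F v).1 : ℝ)| := by
        rw [show transl ω φ (γ u) (F v) = (inner ℝ (gradφ (γ u)) (F v).1 : ℝ) +
          (transl ω φ (γ u) (F v) - (inner ℝ (gradφ (γ u)) (F v).1 : ℝ)) by ring]
        exact (abs_add_le _ _).trans (by rw [show ((inner ℝ (gradφ (γ u)) (F v).1 : ℝ) +
          (transl ω φ (γ u) (F v) - (inner ℝ (gradφ (γ u)) (F v).1 : ℝ))) -
          (inner ℝ (gradφ (γ u)) (F v).1 : ℝ) = transl ω φ (γ u) (F v) -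
          (inner ℝ (gradφ (γ u)) (F v).1 : ℝ) by ring])
      have h2 : |(inner ℝ (gradφ (γ u)) (F v).1 : ℝ)| ≤ ‖gradφ (γ u)‖ * ‖(F v).1‖ :=
        abs_real_inner_le_norm _ _
      calc |φ (γ v) - φ (γ u)| = |transl ω φ (γ u) (F v)| := by rw [htr]
        _ ≤ |(inner ℝ (gradφ (γ u)) (F v).1 : ℝ)| +
            |transl ω φ (γ u) (F v) - (inner ℝ (gradφ (γ u)) (F v).1 : ℝ)| := habs
        _ ≤ ‖gradφ (γ u)‖ * ‖(F v).1‖ + 1 * nrm (F v) := add_le_add h2 hb'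
        _ = ‖gradφ (γ u)‖ * ‖(F v).1‖ + nrm (F v) := by ring
    have hlim : Filter.Tendsto (fun v => ‖gradφ (γ u)‖ * ‖(F v).1‖ + nrm (F v))
        (𝓝 u) (𝓝 0) := by
      have h1 : Filter.Tendsto (fun v => ‖(F v).1‖) (𝓝 u) (𝓝 0) := by
        have := (continuous_norm.comp (continuous_fst.comp hFcont)).tendsto u
        simp only [Function.comp_apply, hF0] at this
        have h' : Filter.Tendsto ((fun a => ‖a‖) ∘ Prod.fst ∘ F) (𝓝 u) (𝓝 0) := by
          simpa using this
        exact h'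
      have := (h1.const_mul ‖gradφ (γ u)‖).add hnF
      simpa using this
    have hto : Filter.Tendsto (fun v => φ (γ v) - φ (γ u)) (𝓝 u) (𝓝 0) :=
      squeeze_zero_norm' (hev.mono fun v hv => by
        simpa [Real.norm_eq_abs] using hv) hlim
    have := hto.add_const (φ (γ u))
    exact (by simpa using this : Filter.Tendsto (fun x => φ (γ x)) (𝓝 u) (𝓝 (φ (γ u))))
  -- norm comparison constant
  obtain ⟨C, hC1, hCle⟩ := exists_nrm_le hnrm
  have hC0 : (0:ℝ) < C := lt_of_lt_of_le one_pos hC1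
  -- the key pointwise derivative
  have key : ∀ u : ℝ, HasDerivAt (fun v => φ (γ v)) ((inner ℝ (gradφ (γ u)) x : ℝ)) u := by
    intro u
    obtain ⟨hgperp, hg⟩ := hφ (γ u) (hγW u)
    set B : ℝ := ‖ω (e1 m) x‖ with hB
    have hB0 : 0 ≤ B := norm_nonneg _
    set A := (γ u).1 + (2 * φ (γ u)) • e1 m with hA
    set F : ℝ → G m k := fun s => ((γ (u + s)).1 - (γ u).1,
      (γ (u + s)).2 - (γ u).2 - ω A ((γ (u + s)).1 - (γ u).1)) with hF
    have hF1 : ∀ s : ℝ, (F s).1 = s • x := by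
      intro s
      show (γ (u + s)).1 - (γ u).1 = s • x
      rw [haffine u (u + s)]
      simp
    have hFW : ∀ s, F s ∈ Wset m k := by
      intro s
      show (inner ℝ ((γ (u + s)).1 - (γ u).1) (e1 m) : ℝ) = 0
      rw [inner_sub_left, hWe (u + s), hWe u, sub_zero]
    have htr : ∀ s, transl ω φ (γ u) (F s) = φ (γ (u + s)) - φ (γ u) := by
      intro s
      show φ ((γ u).1 + ((γ (u + s)).1 - (γ u).1),
        (γ u).2 + ((γ (u + s)).2 - (γ u).2 - ω A ((γ (u + s)).1 - (γ u).1))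
          + ω A ((γ (u + s)).1 - (γ u).1)) - φ (γ u) = φ (γ (u + s)) - φ (γ u)
      have e1' : (γ u).1 + ((γ (u + s)).1 - (γ u).1) = (γ (u + s)).1 := by abel
      have e2' : (γ u).2 + ((γ (u + s)).2 - (γ u).2 - ω A ((γ (u + s)).1 - (γ u).1))
          + ω A ((γ (u + s)).1 - (γ u).1) = (γ (u + s)).2 := by abel
      rw [e1', e2']
    have hFcont : Continuous F := by
      have cγ : Continuous fun s : ℝ => γ (u + s) :=
        hγcont.comp (continuous_const.add continuous_id)
      have c1 : Continuous fun s : ℝ => (γ (u + s)).1 - (γ u).1 :=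
        (continuous_fst.comp cγ).sub continuous_const
      have c2 : Continuous fun s : ℝ => (γ (u + s)).2 - (γ u).2 :=
        (continuous_snd.comp cγ).sub continuous_const
      have cω : Continuous (ω A) := (ω A).continuous_of_finiteDimensional
      exact c1.prodMk (c2.sub (cω.comp c1))
    have hF0 : F 0 = 0 := by simp [hF]
    have hnF : Filter.Tendsto (fun s => nrm (F s)) (𝓝 0) (𝓝 0) := by
      have := (hnrm.continuous.comp hFcont).tendsto 0
      simp only [Function.comp_apply, hF0, nrm_zero' hnrm] at this
      exact this
    -- derivative of the second component of F
    have hFd2 : ∀ s : ℝ, HasDerivAt (fun t => (F t).2)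
        ((2 * (φ (γ (u + s)) - φ (γ u))) • ω (e1 m) x) s := by
      intro s
      have hγs : HasDerivAt (fun t => γ (u + t))
          ((x, ω ((γ (u + s)).1 + (2 * φ (γ (u + s))) • e1 m) x) : G m k) s :=
        HasDerivAt.comp_const_add u s (hγ' (u + s))
      have h2 : HasDerivAt (fun t => (γ (u + t)).2)
          (ω ((γ (u + s)).1 + (2 * φ (γ (u + s))) • e1 m) x) s :=
        (ContinuousLinearMap.snd ℝ (EuclideanSpace ℝ (Fin m))
          (EuclideanSpace ℝ (Fin k))).hasFDerivAt.comp_hasDerivAt s hγs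
      have h1 : HasDerivAt (fun t => (γ (u + t)).1) x s :=
        (ContinuousLinearMap.fst ℝ (EuclideanSpace ℝ (Fin m))
          (EuclideanSpace ℝ (Fin k))).hasFDerivAt.comp_hasDerivAt s hγs
      have hL : HasDerivAt (fun t => ω A ((γ (u + t)).1)) (ω A x) s := by
        have := (LinearMap.toContinuousLinearMap (ω A)).hasFDerivAt.comp_hasDerivAt s h1
        exact this
      have hfun : (fun t => (F t).2) = fun t =>
          ((γ (u + t)).2 - (γ u).2) - (ω A ((γ (u + t)).1) - ω A ((γ u).1)) := by
        funext t
        show (γ (u + t)).2 - (γ u).2 - ω A ((γ (u + t)).1 - (γ u).1) = _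
        rw [map_sub]
      have hsub : HasDerivAt (fun t => (F t).2)
          (ω ((γ (u + s)).1 + (2 * φ (γ (u + s))) • e1 m) x - ω A x) s := by
        rw [hfun]
        exact (h2.sub_const _).sub (hL.sub_const _)
      have heq : ω ((γ (u + s)).1 + (2 * φ (γ (u + s))) • e1 m) x - ω A x
          = (2 * (φ (γ (u + s)) - φ (γ u))) • ω (e1 m) x := by
        rw [hA, haffine u (u + s)]
        have hxx : ω x x = 0 := hω.1 x
        simp only [map_add, LinearMap.map_smul, LinearMap.add_apply,
          LinearMap.smul_apply, hxx, smul_zero, add_zero]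
        rw [mul_sub, sub_smul]
        abel
      exact heq ▸ hsub
    -- mean value bound
    have hMVT : ∀ s : ℝ, ∀ M : ℝ, (∀ τ ∈ Set.uIcc (0:ℝ) s, |φ (γ (u + τ)) - φ (γ u)| ≤ M) →
        ‖(F s).2‖ ≤ 2 * M * B * |s| := by
      intro s M hM
      have hbound : ∀ τ ∈ Set.uIcc (0:ℝ) s,
          ‖(2 * (φ (γ (u + τ)) - φ (γ u))) • ω (e1 m) x‖ ≤ 2 * M * B := by
        intro τ hτ
        rw [norm_smul, Real.norm_eq_abs, abs_mul, abs_two, ← hB]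
        have h := hM τ hτ
        have hM0 : (0:ℝ) ≤ M := le_trans (abs_nonneg _) h
        nlinarith [abs_nonneg (φ (γ (u + τ)) - φ (γ u))]
      have h := Convex.norm_image_sub_le_of_norm_hasDerivWithin_le
        (fun τ _ => (hFd2 τ).hasDerivWithinAt) hbound (convex_uIcc 0 s)
        Set.left_mem_uIcc Set.right_mem_uIcc
      have hF02 : (F 0).2 = 0 := by rw [hF0]; rfl
      rw [hF02, sub_zero, sub_zero, Real.norm_eq_abs] at h
      exact h
    -- first smallness radius, with ε = 1
    obtain ⟨δ₁, hδ₁, hb₁⟩ := hg 1 one_pos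
    obtain ⟨r₁, hr₁, hball₁⟩ : ∃ r : ℝ, 0 < r ∧ ∀ t : ℝ, |t| ≤ r → nrm (F t) < δ₁ := by
      have := hnF.eventually_lt_const hδ₁
      rw [Metric.eventually_nhds_iff] at this
      obtain ⟨ε₀, hε₀, he⟩ := this
      exact ⟨ε₀ / 2, by linarith, fun t ht =>
        he (by rw [Real.dist_eq, sub_zero]; linarith)⟩
    -- bootstrap: |φ(γ(u+t)) - φ(γ u)| ≤ K |t| for |t| ≤ r₁
    set K : ℝ := 2 * (‖gradφ (γ u)‖ * ‖x‖ + C * ‖x‖ + C ^ 2 * B) with hK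
    have hK0 : 0 ≤ K := by positivity
    have hψK : ∀ t : ℝ, |t| ≤ r₁ → |φ (γ (u + t)) - φ (γ u)| ≤ K * |t| := by
      intro t ht
      have hne : (Set.Icc (-|t|) |t|).Nonempty :=
        ⟨0, neg_nonpos.2 (abs_nonneg t), abs_nonneg t⟩
      have hψcont : ContinuousOn (fun τ => |φ (γ (u + τ)) - φ (γ u)|)
          (Set.Icc (-|t|) |t|) :=
        (((hφγ.comp (continuous_const.add continuous_id)).sub
          continuous_const).abs).continuousOn
      obtain ⟨t₀, ht₀mem, ht₀max⟩ := isCompact_Icc.exists_isMaxOn hne hψcont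
      set M := |φ (γ (u + t₀)) - φ (γ u)| with hM
      have hM0 : 0 ≤ M := abs_nonneg _
      have ht₀ : |t₀| ≤ |t| := abs_le.2 ⟨ht₀mem.1, ht₀mem.2⟩
      have hmemsub : ∀ τ ∈ Set.uIcc (0:ℝ) t₀, τ ∈ Set.Icc (-|t|) |t| := by
        intro τ hτ
        have h3 := le_abs_self t₀
        have h4 := neg_abs_le t₀
        rcases Set.mem_uIcc.1 hτ with ⟨hτ1, hτ2⟩ | ⟨hτ1, hτ2⟩ <;>
          exact ⟨by linarith, by linarith⟩
      have hF2 : ‖(F t₀).2‖ ≤ 2 * M * B * |t₀| := by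
        apply hMVT
        intro τ hτ
        exact ht₀max (hmemsub τ hτ)
      have hbt₀ := hb₁ (F t₀) (hFW t₀) (hball₁ t₀ (le_trans ht₀ ht))
      have hn1 : ‖(F t₀).1‖ = |t₀| * ‖x‖ := by
        rw [hF1, norm_smul, Real.norm_eq_abs]
      have hnrmF : nrm (F t₀) ≤ C * (|t₀| * ‖x‖ + Real.sqrt (2 * M * B * |t₀|)) := by
        refine le_trans (hCle (F t₀)) ?_
        apply mul_le_mul_of_nonneg_left _ hC0.le
        rw [hn1]
        exact add_le_add le_rfl (Real.sqrt_le_sqrt hF2)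
      have hM1 : M ≤ ‖gradφ (γ u)‖ * (|t₀| * ‖x‖) + nrm (F t₀) := by
        have habs : M ≤ |(inner ℝ (gradφ (γ u)) (F t₀).1 : ℝ)| +
            |transl ω φ (γ u) (F t₀) - (inner ℝ (gradφ (γ u)) (F t₀).1 : ℝ)| := by
          rw [hM, ← htr t₀, show transl ω φ (γ u) (F t₀) =
            (inner ℝ (gradφ (γ u)) (F t₀).1 : ℝ) + (transl ω φ (γ u) (F t₀) -
            (inner ℝ (gradφ (γ u)) (F t₀).1 : ℝ)) by ring]
          exact (abs_add_le _ _).trans (by rw [add_sub_cancel_left])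
        have h2 : |(inner ℝ (gradφ (γ u)) (F t₀).1 : ℝ)| ≤ ‖gradφ (γ u)‖ * ‖(F t₀).1‖ :=
          abs_real_inner_le_norm _ _
        rw [hn1] at h2
        calc M ≤ |(inner ℝ (gradφ (γ u)) (F t₀).1 : ℝ)| +
            |transl ω φ (γ u) (F t₀) - (inner ℝ (gradφ (γ u)) (F t₀).1 : ℝ)| := habs
          _ ≤ ‖gradφ (γ u)‖ * (|t₀| * ‖x‖) + 1 * nrm (F t₀) := add_le_add h2 hbt₀
          _ = ‖gradφ (γ u)‖ * (|t₀| * ‖x‖) + nrm (F t₀) := by ring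
      -- AM-GM
      have hsq : C * Real.sqrt (2 * M * B * |t₀|) ≤ (C ^ 2 * (2 * B * |t₀|) + M) / 2 := by
        have harg : 2 * M * B * |t₀| = (2 * B * |t₀|) * M := by ring
        rw [harg]
        exact sqrt_amgm C (2 * B * |t₀|) M hC0.le (by positivity) hM0
      have hMK : M ≤ K * |t₀| := by
        have hexp : nrm (F t₀) ≤ C * (|t₀| * ‖x‖) + C * Real.sqrt (2 * M * B * |t₀|) := by
          calc nrm (F t₀) ≤ C * (|t₀| * ‖x‖ + Real.sqrt (2 * M * B * |t₀|)) := hnrmF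
            _ = C * (|t₀| * ‖x‖) + C * Real.sqrt (2 * M * B * |t₀|) := by ring
        rw [hK]
        nlinarith [hM1, hexp, hsq]
      have hψt : |φ (γ (u + t)) - φ (γ u)| ≤ M :=
        ht₀max ⟨neg_abs_le t, le_abs_self t⟩
      calc |φ (γ (u + t)) - φ (γ u)| ≤ M := hψt
        _ ≤ K * |t₀| := hMK
        _ ≤ K * |t| := mul_le_mul_of_nonneg_left ht₀ hK0
    -- quantitative bound on nrm (F s)
    set C₅ : ℝ := C * (‖x‖ + Real.sqrt (2 * K * B)) with hC₅
    have hC₅0 : 0 ≤ C₅ := by positivity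
    have hFlin : ∀ s : ℝ, |s| ≤ r₁ → nrm (F s) ≤ C₅ * |s| := by
      intro s hs
      have hF2 : ‖(F s).2‖ ≤ 2 * (K * |s|) * B * |s| := by
        apply hMVT
        intro τ hτ
        have hτs : |τ| ≤ |s| := by
          have h3 := le_abs_self s
          have h4 := neg_abs_le s
          rcases Set.mem_uIcc.1 hτ with ⟨hτ1, hτ2⟩ | ⟨hτ1, hτ2⟩ <;>
            exact abs_le.2 ⟨by linarith, by linarith⟩
        exact le_trans (hψK τ (le_trans hτs hs)) (mul_le_mul_of_nonneg_left hτs hK0)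
      have hsqr : Real.sqrt ‖(F s).2‖ ≤ Real.sqrt (2 * K * B) * |s| := by
        have h1 : ‖(F s).2‖ ≤ (2 * K * B) * |s| ^ 2 := by
          calc ‖(F s).2‖ ≤ 2 * (K * |s|) * B * |s| := hF2
            _ = (2 * K * B) * |s| ^ 2 := by ring
        calc Real.sqrt ‖(F s).2‖ ≤ Real.sqrt ((2 * K * B) * |s| ^ 2) :=
              Real.sqrt_le_sqrt h1
          _ = Real.sqrt (2 * K * B) * Real.sqrt (|s| ^ 2) := by
              rw [Real.sqrt_mul (by positivity)]
          _ = Real.sqrt (2 * K * B) * |s| := by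
              rw [Real.sqrt_sq (abs_nonneg s)]
      have hn1 : ‖(F s).1‖ = |s| * ‖x‖ := by
        rw [hF1, norm_smul, Real.norm_eq_abs]
      calc nrm (F s) ≤ C * (‖(F s).1‖ + Real.sqrt ‖(F s).2‖) := hCle _
        _ ≤ C * (|s| * ‖x‖ + Real.sqrt (2 * K * B) * |s|) := by
            rw [hn1]
            exact mul_le_mul_of_nonneg_left (add_le_add le_rfl hsqr) hC0.le
        _ = C₅ * |s| := by rw [hC₅]; ring
    -- conclude HasDerivAt
    rw [hasDerivAt_iff_isLittleO, Asymptotics.isLittleO_iff]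
    intro ε hε
    obtain ⟨δ₂, hδ₂, hb₂⟩ := hg (ε / (C₅ + 1)) (by positivity)
    obtain ⟨r₂, hr₂, hball₂⟩ : ∃ r : ℝ, 0 < r ∧ ∀ t : ℝ, |t| ≤ r → nrm (F t) < δ₂ := by
      have := hnF.eventually_lt_const hδ₂
      rw [Metric.eventually_nhds_iff] at this
      obtain ⟨ε₀, hε₀, he⟩ := this
      exact ⟨ε₀ / 2, by linarith, fun t ht =>
        he (by rw [Real.dist_eq, sub_zero]; linarith)⟩
    have hr : 0 < min r₁ r₂ := lt_min hr₁ hr₂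
    filter_upwards [Metric.ball_mem_nhds u hr] with v hv
    have habs : |v - u| ≤ min r₁ r₂ := le_of_lt (by
      rw [Metric.mem_ball, Real.dist_eq] at hv; exact hv)
    have h1 : |v - u| ≤ r₁ := le_trans habs (min_le_left _ _)
    have h2 : |v - u| ≤ r₂ := le_trans habs (min_le_right _ _)
    have hbb := hb₂ (F (v - u)) (hFW (v - u)) (hball₂ (v - u) h2)
    have hvs : u + (v - u) = v := by ring
    have e0 : φ (γ v) - φ (γ u) = transl ω φ (γ u) (F (v - u)) := by
      rw [htr (v - u), hvs]
    have e1' : (inner ℝ (gradφ (γ u)) ((F (v - u)).1) : ℝ) =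
        (v - u) * (inner ℝ (gradφ (γ u)) x : ℝ) := by
      rw [hF1, real_inner_smul_right]
    calc ‖φ (γ v) - φ (γ u) - (v - u) • (inner ℝ (gradφ (γ u)) x : ℝ)‖
        = |transl ω φ (γ u) (F (v - u)) - (inner ℝ (gradφ (γ u)) ((F (v - u)).1) : ℝ)| := by
          rw [Real.norm_eq_abs, e0, e1', smul_eq_mul]
      _ ≤ (ε / (C₅ + 1)) * nrm (F (v - u)) := hbb
      _ ≤ (ε / (C₅ + 1)) * (C₅ * |v - u|) :=
          mul_le_mul_of_nonneg_left (hFlin (v - u) h1) (by positivity)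
      _ ≤ ε * |v - u| := by
          rw [div_mul_eq_mul_div, div_le_iff₀ (by positivity : (0:ℝ) < C₅ + 1)]
          nlinarith [mul_nonneg hε.le (abs_nonneg (v - u))]
      _ = ε * ‖v - u‖ := by rw [Real.norm_eq_abs]
  -- continuity of the derivative
  have hDcont : Continuous fun u : ℝ => (inner ℝ (gradφ (γ u)) x : ℝ) :=
    Continuous.inner (hcont.comp_continuous hγcont hγW) continuous_const
  refine ⟨key, hDcont, fun u => ?_⟩
  have hint := intervalIntegral.integral_eq_sub_of_hasDerivAt
    (f := fun v => φ (γ v)) (fun t _ => key t) (hDcont.intervalIntegrable u₀ u)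
  rw [hint]
  show φ (γ u) = φ w₀ + (φ (γ u) - φ (γ u₀))
  rw [hγ0]
  ring

end Carnot2
end
end

section
/- Let G be a step-2 Carnot group (as in the context) and let ‖(x,z)‖ = |x| + |z|^{1/2} and d(p,q) = ‖q^{-1}·p‖. There exist N ∈ ℕ and C ≥ 1, depending only on m and k, such that for all p₁, p₂ ∈ G there are n ≤ N points q₀ = p₁, q₁, …, q_n = p₂ in G and vectors u₁, …, u_n ∈ ℝ^m with q_i = q_{i−1}·(u_i, 0) for every i = 1, …, n, and Σ_{i=1}^n |u_i| ≤ C·d(p₁, p₂). (Equivalently: p₁ and p₂ are contained in a connected union of at most N horizontal line segments of total length at most C·d(p₁,p₂).) -/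
set_option linter.unusedVariables false
open MeasureTheory
open scoped ENNReal NNReal Topology

noncomputable section

namespace Carnot2

variable {m k d : ℕ}

/-! ### Auxiliary machinery for Statement 15 -/

/-- Endpoint of the horizontal polygonal path starting at `p` with increments `L`. -/
def run (ω : Br m k) (p : G m k) (L : List (EuclideanSpace ℝ (Fin m))) : G m k :=
  L.foldl (fun q u => gmul ω q ((u, 0) : G m k)) p

lemma run_nil (ω : Br m k) (p : G m k) : run ω p [] = p := rfl

lemma run_append (ω : Br m k) (p : G m k) (L₁ L₂ : List (EuclideanSpace ℝ (Fin m))) :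
    run ω p (L₁ ++ L₂) = run ω (run ω p L₁) L₂ :=
  List.foldl_append

/-- `L` is a polygonal path realizing the vertical increment `z` from any base point. -/
def Reach (ω : Br m k) (z : EuclideanSpace ℝ (Fin k))
    (L : List (EuclideanSpace ℝ (Fin m))) : Prop :=
  ∀ q : G m k, run ω q L = (q.1, q.2 + z)

lemma reach_nil (ω : Br m k) : Reach ω 0 [] := by
  intro q; simp [run_nil]

lemma reach_append {ω : Br m k} {z₁ z₂ : EuclideanSpace ℝ (Fin k)}
    {L₁ L₂ : List (EuclideanSpace ℝ (Fin m))}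
    (h₁ : Reach ω z₁ L₁) (h₂ : Reach ω z₂ L₂) :
    Reach ω (z₁ + z₂) (L₁ ++ L₂) := by
  intro q
  rw [run_append, h₁, h₂]
  simp [add_assoc]

lemma skew {ω : Br m k} (halt : ∀ u, ω u u = 0) (u v : EuclideanSpace ℝ (Fin m)) :
    ω v u = - ω u v := by
  have h := halt (u + v)
  simp only [map_add, LinearMap.add_apply, halt u, halt v, zero_add, add_zero] at h
  linear_combination (norm := module) h

lemma omega_smul (ω : Br m k) (α β : ℝ) (a b : EuclideanSpace ℝ (Fin m)) :
    ω (α • a) (β • b) = (α * β) • ω a b := by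
  rw [LinearMap.map_smul₂, LinearMap.map_smul, smul_smul]

lemma reach_comm (ω : Br m k) (halt : ∀ u, ω u u = 0) (u v : EuclideanSpace ℝ (Fin m)) :
    Reach ω (ω u v - ω v u) [u, v, -u, -v] := by
  intro q
  simp only [run, List.foldl, gmul]
  refine Prod.ext ?_ ?_
  · show q.1 + u + v + -u + -v = q.1
    abel
  · show q.2 + 0 + ω q.1 u + 0 + ω (q.1 + u) v + 0 + ω (q.1 + u + v) (-u) + 0
        + ω (q.1 + u + v + -u) (-v) = q.2 + (ω u v - ω v u)
    simp only [map_add, map_neg, LinearMap.add_apply, LinearMap.neg_apply, halt u, halt v]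
    abel

lemma reach_scaled (ω : Br m k) (halt : ∀ u, ω u u = 0) (c : ℝ)
    (a b : EuclideanSpace ℝ (Fin m)) :
    ∃ L, Reach ω (c • ω a b) L ∧ L.length = 4 ∧
      (L.map norm).sum ≤ 2 * Real.sqrt |c| * (‖a‖ + ‖b‖) := by
  set σ : ℝ := if c < 0 then -1 else 1 with hσ
  set s : ℝ := Real.sqrt (|c| / 2) with hs
  have hs0 : 0 ≤ s := Real.sqrt_nonneg _
  have hss : s * s = |c| / 2 := Real.mul_self_sqrt (by positivity)
  have hσabs : |σ| = 1 := by
    rw [hσ]; split <;> simp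
  have hσc : σ * |c| = c := by
    rw [hσ]; split
    · rw [abs_of_neg ‹c < 0›]; ring
    · rw [abs_of_nonneg (le_of_not_gt ‹¬ c < 0›)]; ring
  refine ⟨[(σ * s) • a, s • b, -((σ * s) • a), -(s • b)], ?_, rfl, ?_⟩
  · have h := reach_comm ω halt ((σ * s) • a) (s • b)
    have hz : ω ((σ * s) • a) (s • b) - ω (s • b) ((σ * s) • a) = c • ω a b := by
      rw [skew halt ((σ * s) • a) (s • b), omega_smul, sub_neg_eq_add, ← two_smul ℝ,
        smul_smul]
      congr 1
      have h2 : 2 * (σ * s * s) = σ * |c| := by rw [mul_assoc, hss]; ring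
      rw [h2, hσc]
    rwa [hz] at h
  · have hsle : s ≤ Real.sqrt |c| := by
      apply Real.sqrt_le_sqrt; linarith [abs_nonneg c]
    have ha : ‖(σ * s) • a‖ ≤ Real.sqrt |c| * ‖a‖ := by
      rw [norm_smul]
      have h3 : ‖σ * s‖ ≤ Real.sqrt |c| := by
        rw [Real.norm_eq_abs, abs_mul, hσabs, one_mul, abs_of_nonneg hs0]; exact hsle
      exact mul_le_mul_of_nonneg_right h3 (norm_nonneg a)
    have hb : ‖s • b‖ ≤ Real.sqrt |c| * ‖b‖ := by
      rw [norm_smul, Real.norm_eq_abs, abs_of_nonneg hs0]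
      exact mul_le_mul_of_nonneg_right hsle (norm_nonneg b)
    simp only [List.map_cons, List.map_nil, List.sum_cons, List.sum_nil, norm_neg, add_zero]
    nlinarith [norm_nonneg a, norm_nonneg b, Real.sqrt_nonneg |c|]

lemma reach_pairs (ω : Br m k) (halt : ∀ u, ω u u = 0) (c : ℝ)
    (T : List (EuclideanSpace ℝ (Fin m) × EuclideanSpace ℝ (Fin m))) :
    ∃ L, Reach ω (c • (T.map fun ab => ω ab.1 ab.2).sum) L ∧
      L.length = 4 * T.length ∧
      (L.map norm).sum ≤
        2 * Real.sqrt |c| * (T.map fun ab => ‖ab.1‖ + ‖ab.2‖).sum := by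
  induction T with
  | nil =>
    exact ⟨[], by simpa using reach_nil ω, by simp, by simp⟩
  | cons ab T ih =>
    obtain ⟨L₂, hL₂, hlen₂, hsum₂⟩ := ih
    obtain ⟨L₁, hL₁, hlen₁, hsum₁⟩ := reach_scaled ω halt c ab.1 ab.2
    refine ⟨L₁ ++ L₂, ?_, ?_, ?_⟩
    · have h := reach_append hL₁ hL₂
      simpa only [List.map_cons, List.sum_cons, smul_add] using h
    · rw [List.length_append, hlen₁, hlen₂, List.length_cons]; ring
    · rw [List.map_append, List.sum_append]
      simp only [List.map_cons, List.sum_cons]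
      calc (L₁.map norm).sum + (L₂.map norm).sum
          ≤ 2 * Real.sqrt |c| * (‖ab.1‖ + ‖ab.2‖) +
            2 * Real.sqrt |c| * (T.map fun ab => ‖ab.1‖ + ‖ab.2‖).sum :=
            add_le_add hsum₁ hsum₂
        _ = _ := by ring

lemma exists_pair_list (ω : Br m k)
    (hspan : Submodule.span ℝ {z | ∃ u v, ω u v = z} = ⊤)
    (e : EuclideanSpace ℝ (Fin k)) :
    ∃ T : List (EuclideanSpace ℝ (Fin m) × EuclideanSpace ℝ (Fin m)),
      (T.map fun ab => ω ab.1 ab.2).sum = e := by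
  have he : e ∈ Submodule.span ℝ {z | ∃ u v, ω u v = z} := by rw [hspan]; trivial
  induction he using Submodule.span_induction with
  | mem z hz =>
    obtain ⟨u, v, huv⟩ := hz
    exact ⟨[(u, v)], by simpa using huv⟩
  | zero => exact ⟨[], by simp⟩
  | add x y _ _ hx hy =>
    obtain ⟨T₁, h₁⟩ := hx
    obtain ⟨T₂, h₂⟩ := hy
    exact ⟨T₁ ++ T₂, by rw [List.map_append, List.sum_append, h₁, h₂]⟩
  | smul r x _ hx =>
    obtain ⟨T, hT⟩ := hx
    refine ⟨T.map fun ab => (r • ab.1, ab.2), ?_⟩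
    rw [← hT, List.smul_sum, List.map_map, List.map_map]
    refine congrArg List.sum (List.map_congr_left fun ab _ => ?_)
    simp only [Function.comp_apply, LinearMap.map_smul, LinearMap.smul_apply]

lemma sum_coord_single (z : EuclideanSpace ℝ (Fin k)) :
    ∑ j : Fin k, z j • EuclideanSpace.single j (1 : ℝ) = z := by
  have h := (EuclideanSpace.basisFun (Fin k) ℝ).sum_repr z
  simpa using h

lemma coord_le_norm (z : EuclideanSpace ℝ (Fin k)) (j : Fin k) : |z j| ≤ ‖z‖ := by
  rw [EuclideanSpace.norm_eq, ← Real.sqrt_sq_eq_abs]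
  apply Real.sqrt_le_sqrt
  calc z j ^ 2 = ‖z j‖ ^ 2 := by rw [Real.norm_eq_abs, sq_abs]
    _ ≤ ∑ i, ‖z i‖ ^ 2 :=
      Finset.single_le_sum (f := fun i => ‖z i‖ ^ 2) (fun i _ => by positivity)
        (Finset.mem_univ j)

lemma reach_vertical_aux (ω : Br m k) (halt : ∀ u, ω u u = 0)
    (T : Fin k → List (EuclideanSpace ℝ (Fin m) × EuclideanSpace ℝ (Fin m)))
    (hT : ∀ j, ((T j).map fun ab => ω ab.1 ab.2).sum = EuclideanSpace.single j (1 : ℝ))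
    (z : EuclideanSpace ℝ (Fin k)) (s : Finset (Fin k)) :
    ∃ L, Reach ω (∑ j ∈ s, z j • EuclideanSpace.single j (1 : ℝ)) L ∧
      L.length ≤ ∑ j ∈ s, 4 * (T j).length ∧
      (L.map norm).sum ≤
        (∑ j ∈ s, 2 * ((T j).map fun ab => ‖ab.1‖ + ‖ab.2‖).sum) * Real.sqrt ‖z‖ := by
  classical
  induction s using Finset.induction with
  | empty => exact ⟨[], by simpa using reach_nil ω, by simp, by simp⟩
  | @insert j s hj ih =>
    obtain ⟨L₂, hL₂, hlen₂, hsum₂⟩ := ih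
    obtain ⟨L₁, hL₁, hlen₁, hsum₁⟩ := reach_pairs ω halt (z j) (T j)
    rw [hT j] at hL₁
    have hM : 0 ≤ ((T j).map fun ab => ‖ab.1‖ + ‖ab.2‖).sum := by
      apply List.sum_nonneg
      intro x hx
      obtain ⟨ab, _, rfl⟩ := List.mem_map.1 hx
      positivity
    have hc : Real.sqrt |z j| ≤ Real.sqrt ‖z‖ :=
      Real.sqrt_le_sqrt (coord_le_norm z j)
    refine ⟨L₁ ++ L₂, ?_, ?_, ?_⟩
    · rw [Finset.sum_insert hj]
      exact reach_append hL₁ hL₂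
    · rw [Finset.sum_insert hj, List.length_append, hlen₁]
      omega
    · rw [Finset.sum_insert hj, List.map_append, List.sum_append, add_mul]
      apply add_le_add _ hsum₂
      calc (L₁.map norm).sum
          ≤ 2 * Real.sqrt |z j| * ((T j).map fun ab => ‖ab.1‖ + ‖ab.2‖).sum := hsum₁
        _ ≤ 2 * ((T j).map fun ab => ‖ab.1‖ + ‖ab.2‖).sum * Real.sqrt ‖z‖ := by
            nlinarith [Real.sqrt_nonneg |z j|]

lemma sum_range_getD (L : List (EuclideanSpace ℝ (Fin m))) :
    ∑ i ∈ Finset.range L.length, ‖L.getD i 0‖ = (L.map norm).sum := by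
  induction L with
  | nil => simp
  | cons a L ih =>
    rw [List.length_cons, Finset.sum_range_succ']
    simp only [List.getD_cons_succ, List.getD_cons_zero, ih, List.map_cons, List.sum_cons]
    exact add_comm _ _

lemma chain_of_list (ω : Br m k) (p : G m k) (L : List (EuclideanSpace ℝ (Fin m))) :
    ∃ (q : ℕ → G m k) (u : ℕ → EuclideanSpace ℝ (Fin m)),
      q 0 = p ∧ q L.length = run ω p L ∧
      (∀ i : ℕ, 1 ≤ i → i ≤ L.length → q i = gmul ω (q (i - 1)) ((u i, 0) : G m k)) ∧
      ∑ i ∈ Finset.Icc 1 L.length, ‖u i‖ = (L.map norm).sum := by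
  refine ⟨fun i => run ω p (L.take i), fun i => L.getD (i - 1) 0, ?_, ?_, ?_, ?_⟩
  · simp [run_nil]
  · show run ω p (L.take L.length) = run ω p L
    rw [List.take_length]
  · intro i h1 hi
    obtain ⟨j, rfl⟩ : ∃ j, i = j + 1 := ⟨i - 1, by omega⟩
    have hj : j < L.length := by omega
    show run ω p (L.take (j + 1)) =
      gmul ω (run ω p (L.take (j + 1 - 1))) ((L.getD (j + 1 - 1) 0, 0) : G m k)
    simp only [Nat.add_sub_cancel]
    rw [List.take_succ, List.getElem?_eq_getElem hj, Option.toList_some, run_append,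
      List.getD_eq_getElem?_getD, List.getElem?_eq_getElem hj, Option.getD_some]
    rfl
  · have h1 : Finset.Icc 1 L.length = Finset.Ico 1 (L.length + 1) := by
      rw [Finset.Ico_add_one_right_eq_Icc]
    rw [h1, Finset.sum_Ico_eq_sum_range]
    simp only [Nat.add_sub_cancel, Nat.add_sub_cancel_left]
    exact sum_range_getD L

/-- Horizontal polygonal quasiconvexity of step-2 Carnot groups: any
two points can be joined by a bounded number of horizontal segments of total length
controlled by their distance. -/
theorem statement15 {m k : ℕ} (hm : 2 ≤ m) (hk : 1 ≤ k)
    (ω : Br m k) (hω : IsBracket ω) :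
    ∃ (N : ℕ) (C : ℝ), 1 ≤ C ∧ ∀ p₁ p₂ : G m k, ∃ n : ℕ, n ≤ N ∧
      ∃ (q : ℕ → G m k) (u : ℕ → EuclideanSpace ℝ (Fin m)),
        q 0 = p₁ ∧ q n = p₂ ∧
        (∀ i : ℕ, 1 ≤ i → i ≤ n →
          q i = gmul ω (q (i - 1)) ((u i, 0) : G m k)) ∧
        ∑ i ∈ Finset.Icc 1 n, ‖u i‖ ≤ C * dist' ω nrmK p₁ p₂ := by
  obtain ⟨halt, hspan⟩ := hω
  choose T hT using fun j : Fin k => exists_pair_list ω hspan (EuclideanSpace.single j (1 : ℝ))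
  set Cv : ℝ := ∑ j : Fin k, 2 * ((T j).map fun ab => ‖ab.1‖ + ‖ab.2‖).sum with hCv
  have hCv0 : 0 ≤ Cv := by
    apply Finset.sum_nonneg
    intro j _
    have : 0 ≤ ((T j).map fun ab => ‖ab.1‖ + ‖ab.2‖).sum := by
      apply List.sum_nonneg
      intro x hx
      obtain ⟨ab, _, rfl⟩ := List.mem_map.1 hx
      positivity
    linarith
  refine ⟨1 + ∑ j : Fin k, 4 * (T j).length, 1 + Cv, by linarith, ?_⟩
  intro p₁ p₂
  set x : EuclideanSpace ℝ (Fin m) := p₂.1 - p₁.1 with hx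
  set z' : EuclideanSpace ℝ (Fin k) := p₂.2 - (p₁.2 + 0 + ω p₁.1 x) with hz'
  obtain ⟨L, hL, hlen, hsum⟩ := reach_vertical_aux ω halt T hT z' Finset.univ
  rw [sum_coord_single] at hL
  -- the full list of horizontal increments
  set L' : List (EuclideanSpace ℝ (Fin m)) := x :: L with hL'
  have hrun : run ω p₁ L' = p₂ := by
    show run ω (gmul ω p₁ ((x, 0) : G m k)) L = p₂
    rw [hL (gmul ω p₁ ((x, 0) : G m k))]
    refine Prod.ext ?_ ?_
    · show p₁.1 + x = p₂.1
      rw [hx]; abel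
    · show (p₁.2 + 0 + ω p₁.1 x) + z' = p₂.2
      rw [hz']; abel
  -- distance computations
  set w : EuclideanSpace ℝ (Fin k) := -p₂.2 + p₁.2 + ω (-p₂.1) p₁.1 with hw
  have hd : dist' ω nrmK p₁ p₂ = ‖-p₂.1 + p₁.1‖ + Real.sqrt ‖w‖ := rfl
  have hz'w : z' = -w := by
    rw [hz', hw, hx]
    have h1 : ω p₁.1 (p₂.1 - p₁.1) = ω p₁.1 p₂.1 - ω p₁.1 p₁.1 := by
      rw [map_sub]
    rw [h1, halt p₁.1]
    have h2 : ω (-p₂.1) p₁.1 = - ω p₂.1 p₁.1 := by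
      rw [map_neg, LinearMap.neg_apply]
    rw [h2, skew halt p₂.1 p₁.1]
    abel
  have hxd : ‖x‖ ≤ dist' ω nrmK p₁ p₂ := by
    rw [hd]
    have : ‖x‖ = ‖-p₂.1 + p₁.1‖ := by
      rw [hx, ← norm_neg]; congr 1; abel
    rw [this]
    linarith [Real.sqrt_nonneg ‖w‖]
  have hzd : Real.sqrt ‖z'‖ ≤ dist' ω nrmK p₁ p₂ := by
    rw [hd, hz'w, norm_neg]
    linarith [norm_nonneg (-p₂.1 + p₁.1)]
  have hd0 : 0 ≤ dist' ω nrmK p₁ p₂ := by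
    rw [hd]
    have := norm_nonneg (-p₂.1 + p₁.1)
    have := Real.sqrt_nonneg ‖w‖
    linarith
  obtain ⟨q, u, hq0, hqn, hstep, husum⟩ := chain_of_list ω p₁ L'
  refine ⟨L'.length, ?_, q, u, hq0, by rw [hqn, hrun], hstep, ?_⟩
  · rw [hL', List.length_cons]
    omega
  · rw [husum, hL', List.map_cons, List.sum_cons]
    calc ‖x‖ + (L.map norm).sum
        ≤ dist' ω nrmK p₁ p₂ + Cv * Real.sqrt ‖z'‖ := by
          rw [hCv]; exact add_le_add hxd hsum
      _ ≤ dist' ω nrmK p₁ p₂ + Cv * dist' ω nrmK p₁ p₂ := by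
          have := mul_le_mul_of_nonneg_left hzd hCv0
          linarith
      _ = (1 + Cv) * dist' ω nrmK p₁ p₂ := by ring

end Carnot2
end
end
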